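/- arXiv:1906.06354 — 3 statements merged into one kernel-verified Lean document; each statement's English description precedes it below -/
import Mathlib

section
/- Let n ≥ 1, 0 ≤ k ≤ n, and r ≥ 1. The pullback map Φ^* restricts to a linear isomorphism from P̊_r^-Λ^k(T^n) onto P̊̊_{2r+k}^-Λ^k_e(S^n), the space of even forms in P̊̊_{2r+k}^-Λ^k(S^n). -/
open scoped BigOperators
open MeasureTheory

noncomputable section

/-- Vectors in `ℝ^m`. -/
abbrev Vec (m : ℕ) := Fin m → ℝ

/-- Differential `k`-forms on `ℝ^m`, given pointwise as alternating `k`-tensors. -/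
abbrev Form (m k : ℕ) := Vec m → (Vec m [⋀^Fin k]→ₗ[ℝ] ℝ)

/-- A multivariate polynomial has (total) degree at most `r : ℤ`. -/
def degLE {m : ℕ} (r : ℤ) (p : MvPolynomial (Fin m) ℝ) : Prop :=
  ∀ d ∈ p.support, ((d.sum fun _ e => e : ℕ) : ℤ) ≤ r

/-- `P_rΛ^k(ℝ^m)`: differential `k`-forms with polynomial coefficients of degree at most `r`. -/
def PL (m k : ℕ) (r : ℤ) : Set (Form m k) :=
  {α | ∀ v : Fin k → Vec m, ∃ p : MvPolynomial (Fin m) ℝ,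
      degLE r p ∧ ∀ x, α x v = MvPolynomial.eval x p}

/-- Interior product with the radial vector field `X = Σ xᵢ ∂/∂xᵢ`. -/
def iU {m k : ℕ} (β : Form m (k + 1)) : Form m k := fun x => (β x).curryLeft x

/-- `P_r⁻Λ^k(ℝ^m) := i_X P_{r-1}Λ^{k+1}(ℝ^m)`. -/
def PLm (m k : ℕ) (r : ℤ) : Set (Form m k) := iU '' PL m (k + 1) (r - 1)

/-- The reflection negating the `i`-th coordinate, as a map. -/
def reflFun (m : ℕ) (i : Fin m) (u : Vec m) : Vec m := fun j => if j = i then -u j else u j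

/-- The reflection negating the `i`-th coordinate, as a linear map. -/
def reflLin (m : ℕ) (i : Fin m) : Vec m →ₗ[ℝ] Vec m :=
  LinearMap.pi fun j => if j = i then -LinearMap.proj j else LinearMap.proj j

/-- Pullback of an ambient form along the reflection `R_i`. -/
def reflPull (m k : ℕ) (i : Fin m) (α : Form m k) : Form m k :=
  fun x => (α (reflFun m i x)).compLinearMap (reflLin m i)

/-- A form on `ℝ^m` is even if it is invariant under all coordinate reflections. -/
def IsEven (m k : ℕ) (α : Form m k) : Prop := ∀ i, reflPull m k i α = α

/-- A form on `ℝ^m` is odd if every coordinate reflection negates it. -/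
def IsOdd (m k : ℕ) (α : Form m k) : Prop := ∀ i, reflPull m k i α = -α

/-- The map `Φ(u) = (u₁², …, u_m²)`. -/
def Phi (m : ℕ) (u : Vec m) : Vec m := fun i => u i ^ 2

/-- The differential of `Φ` at `u`. -/
def dPhi (m : ℕ) (u : Vec m) : Vec m →ₗ[ℝ] Vec m :=
  LinearMap.pi fun i => (2 * u i) • LinearMap.proj i

/-- Pullback of ambient forms along `Φ`. -/
def phiPull (m k : ℕ) (α : Form m k) : Form m k :=
  fun u => (α (Phi m u)).compLinearMap (dPhi m u)

/-- The standard simplex `T^{m-1} ⊂ ℝ^m`. -/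
def simplexSet (m : ℕ) : Set (Vec m) := {x | (∀ i, 0 ≤ x i) ∧ ∑ i, x i = 1}

/-- The unit sphere `S^{m-1} ⊂ ℝ^m`. -/
def sphereSet (m : ℕ) : Set (Vec m) := {u | ∑ i, u i ^ 2 = 1}

/-- The linear functional `v ↦ ⟨u, v⟩`. -/
def dotLin (m : ℕ) (u : Vec m) : Vec m →ₗ[ℝ] ℝ := ∑ i, u i • LinearMap.proj i

/-- Orthogonal projection onto the tangent space of the sphere at `u`. -/
def projSph (m : ℕ) (u : Vec m) : Vec m →ₗ[ℝ] Vec m :=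
  LinearMap.id - (dotLin m u).smulRight u

/-- The linear functional `v ↦ Σ vᵢ`. -/
def sumLin (m : ℕ) : Vec m →ₗ[ℝ] ℝ := ∑ i, LinearMap.proj i

/-- Orthogonal projection onto the tangent hyperplane `{Σ vᵢ = 0}` of the simplex. -/
def projSim (m : ℕ) : Vec m →ₗ[ℝ] Vec m :=
  LinearMap.id - ((m : ℝ)⁻¹ • sumLin m).smulRight (fun _ => 1)

/-- Differential `k`-forms on a subset `M ⊆ ℝ^m`, encoded at each point by the canonical
alternating tensor on `ℝ^m` that vanishes in the directions normal to `M` (i.e. the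
pullback along the inclusion, extended by the tangent projection). -/
abbrev FormOn (m : ℕ) (M : Set (Vec m)) (k : ℕ) := M → (Vec m [⋀^Fin k]→ₗ[ℝ] ℝ)

/-- Restriction (pullback along the inclusion) of an ambient form to the simplex. -/
def resSim (m k : ℕ) (α : Form m k) : FormOn m (simplexSet m) k :=
  fun x => (α x.1).compLinearMap (projSim m)

/-- Restriction (pullback along the inclusion) of an ambient form to the sphere. -/
def resSph (m k : ℕ) (α : Form m k) : FormOn m (sphereSet m) k :=
  fun u => (α u.1).compLinearMap (projSph m u.1)

/-- `P_rΛ^k(T^{m-1})`. -/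
def PLsim (m k : ℕ) (r : ℤ) : Set (FormOn m (simplexSet m) k) := resSim m k '' PL m k r

/-- `P_rΛ^k(S^{m-1})`. -/
def PLsph (m k : ℕ) (r : ℤ) : Set (FormOn m (sphereSet m) k) := resSph m k '' PL m k r

/-- `P_r⁻Λ^k(T^{m-1})`. -/
def PLmsim (m k : ℕ) (r : ℤ) : Set (FormOn m (simplexSet m) k) := resSim m k '' PLm m k r

/-- `P_r⁻Λ^k(S^{m-1})`. -/
def PLmsph (m k : ℕ) (r : ℤ) : Set (FormOn m (sphereSet m) k) := resSph m k '' PLm m k r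

lemma phi_mem_simplex {m : ℕ} {u : Vec m} (hu : u ∈ sphereSet m) :
    Phi m u ∈ simplexSet m :=
  ⟨fun _ => sq_nonneg _, hu⟩

/-- Pullback `Φ^* : Λ^k(T^{m-1}) → Λ^k(S^{m-1})` along `Φ : S^{m-1} → T^{m-1}`. -/
def phiPullTS (m k : ℕ) (a : FormOn m (simplexSet m) k) : FormOn m (sphereSet m) k :=
  fun u => (a ⟨Phi m u.1, phi_mem_simplex u.2⟩).compLinearMap
    ((dPhi m u.1).comp (projSph m u.1))

lemma refl_mem_sphere {m : ℕ} {i : Fin m} {u : Vec m} (hu : u ∈ sphereSet m) :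
    reflFun m i u ∈ sphereSet m := by
  have : ∀ j, (reflFun m i u j) ^ 2 = u j ^ 2 := by
    intro j; simp only [reflFun]; split <;> ring
  simpa only [sphereSet, Set.mem_setOf_eq, this] using hu

/-- Pullback of a form on the sphere along the reflection `R_i`. -/
def reflPullSph (m k : ℕ) (i : Fin m) (α : FormOn m (sphereSet m) k) :
    FormOn m (sphereSet m) k :=
  fun u => (α ⟨reflFun m i u.1, refl_mem_sphere u.2⟩).compLinearMap (reflLin m i)

/-- A form on the sphere is even if it is invariant under all coordinate reflections. -/
def IsEvenSph (m k : ℕ) (α : FormOn m (sphereSet m) k) : Prop :=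
  ∀ i, reflPullSph m k i α = α

/-- A form on the sphere is odd if every coordinate reflection negates it. -/
def IsOddSph (m k : ℕ) (α : FormOn m (sphereSet m) k) : Prop :=
  ∀ i, reflPullSph m k i α = -α

/-- The bubble function `u_N = u₁ ⋯ u_m`. -/
def bubble (m : ℕ) (u : Vec m) : ℝ := ∏ i, u i

/-- Multiplication of a form on the sphere by the bubble function. -/
def bubbleSmul (m k : ℕ) (α : FormOn m (sphereSet m) k) : FormOn m (sphereSet m) k :=
  fun u => bubble m u.1 • α u

/-- Multiplication of an ambient form by the bubble function. -/
def bubbleSmulAmb (m k : ℕ) (α : Form m k) : Form m k :=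
  fun u => bubble m u • α u

/-- The standard volume form on `ℝ^m`. -/
def volForm (m : ℕ) : (Vec m) [⋀^Fin m]→ₗ[ℝ] ℝ := (Pi.basisFun ℝ (Fin m)).det

/-- Iterated interior product: insert the vectors `v 0, …, v (k-1)` into the
first `k` slots of an alternating `(k+j)`-tensor. -/
def contrMany {m : ℕ} : (k : ℕ) → (Fin k → Vec m) → {j : ℕ} →
    ((Vec m) [⋀^Fin (k + j)]→ₗ[ℝ] ℝ) → ((Vec m) [⋀^Fin j]→ₗ[ℝ] ℝ)
  | 0, _, j, α => α.domDomCongr (finCongr (Nat.zero_add j))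
  | (k + 1), v, j, α =>
      contrMany k (fun i => v i.succ)
        ((α.domDomCongr (finCongr (by omega : (k + 1) + j = (k + j) + 1))).curryLeft (v 0))

/-- The Hodge star on alternating tensors on `ℝ^m` (standard metric and orientation):
`(⋆α)(w₁,…,w_{m-k}) = (1/k!) Σ_g α(e_{g 0},…,e_{g(k-1)}) vol(e_{g 0},…,e_{g(k-1)},w₁,…,w_{m-k})`. -/
def starAlt (m k : ℕ) (α : (Vec m) [⋀^Fin k]→ₗ[ℝ] ℝ) : (Vec m) [⋀^Fin (m - k)]→ₗ[ℝ] ℝ :=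
  if h : k ≤ m then
    (k.factorial : ℝ)⁻¹ •
      ∑ g : Fin k → Fin m,
        α (fun i => Pi.single (g i) 1) •
          contrMany k (fun i => Pi.single (g i) 1)
            ((volForm m).domDomCongr (finCongr (by omega : m = k + (m - k))))
  else 0

/-- The Hodge star `⋆_{ℝ^m}` applied pointwise to ambient forms. -/
def starR (m k : ℕ) (α : Form m k) : Form m (m - k) := fun x => starAlt m k (α x)

/-- The wedge product of alternating tensors. -/
def wedgeAlt {m k l : ℕ} (α : (Vec m) [⋀^Fin k]→ₗ[ℝ] ℝ) (β : (Vec m) [⋀^Fin l]→ₗ[ℝ] ℝ) :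
    (Vec m) [⋀^Fin (k + l)]→ₗ[ℝ] ℝ :=
  ((TensorProduct.lid ℝ ℝ).toLinearMap.compAlternatingMap (α.domCoprod β)).domDomCongr
    finSumFinEquiv

/-- The conormal `ν = Σ uᵢ duᵢ` at `u`, as an alternating 1-tensor. -/
def nuForm (m : ℕ) (u : Vec m) : (Vec m) [⋀^Fin 1]→ₗ[ℝ] ℝ :=
  AlternatingMap.ofSubsingleton ℝ (Vec m) ℝ (0 : Fin 1) (dotLin m u)

/-- The extended Hodge star `⋆_{S^{m-1}} α := ⋆_{ℝ^m}(ν ∧ α)` on ambient forms. -/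
def starSphAmb (m k : ℕ) (α : Form m k) : Form m (m - (1 + k)) :=
  fun x => starAlt m (1 + k) (wedgeAlt (nuForm m x) (α x))

/-- The Hodge star of a form on the sphere (w.r.t. the round metric and the orientation
induced by the outward normal), computed as the restriction of `⋆_{ℝ^m}(ν ∧ ·)`. -/
def starSph (m k : ℕ) (α : FormOn m (sphereSet m) k) :
    FormOn m (sphereSet m) (m - (1 + k)) :=
  fun u => (starAlt m (1 + k) (wedgeAlt (nuForm m u.1) (α u))).compLinearMap (projSph m u.1)

/-- Re-indexing a form along an equality of form degrees. -/
def castForm {m k l : ℕ} (h : k = l) (α : Form m k) : Form m l :=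
  fun x => (α x).domDomCongr (finCongr h)

/-- Re-indexing a form on a subset along an equality of form degrees. -/
def castFormOn {m : ℕ} {M : Set (Vec m)} {k l : ℕ} (h : k = l) (α : FormOn m M k) :
    FormOn m M l :=
  fun x => (α x).domDomCongr (finCongr h)

/-- Trace on the boundary of the simplex vanishes: at every boundary point (a point of some
face `xᵢ = 0`), the form vanishes on vectors tangent to that face. -/
def vanishBdry (m k : ℕ) (a : FormOn m (simplexSet m) k) : Prop :=
  ∀ (x : simplexSet m) (i : Fin m), x.1 i = 0 →
    ∀ v : Fin k → Vec m, (∀ j, (∑ l, v j l) = 0 ∧ v j i = 0) → a x v = 0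

/-- `P̊_rΛ^k(T^{m-1})`: forms in `P_rΛ^k(T^{m-1})` with vanishing trace on the boundary. -/
def PLosim (m k : ℕ) (r : ℤ) : Set (FormOn m (simplexSet m) k) :=
  {a ∈ PLsim m k r | vanishBdry m k a}

/-- `P̊_r⁻Λ^k(T^{m-1})`. -/
def PLmosim (m k : ℕ) (r : ℤ) : Set (FormOn m (simplexSet m) k) :=
  {a ∈ PLmsim m k r | vanishBdry m k a}

/-- A form on the sphere vanishes (as an alternating tensor on the tangent space)
at every point of `S^{m-1} ∩ Γ`, where `Γ = ∪ᵢ {uᵢ = 0}`. -/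
def zeroOnGammaSph (m k : ℕ) (α : FormOn m (sphereSet m) k) : Prop :=
  ∀ u : sphereSet m, (∃ i, u.1 i = 0) →
    ∀ v : Fin k → Vec m, (∀ j, ∑ l, u.1 l * v j l = 0) → α u v = 0

/-- An ambient form vanishes (as an alternating tensor) at every point of `Γ`. -/
def zeroOnGammaAmb (m k : ℕ) (α : Form m k) : Prop :=
  ∀ u : Vec m, (∃ i, u i = 0) → α u = 0

/-- The wedge product of forms on a subset. -/
def wedgeOn {m : ℕ} {M : Set (Vec m)} {k l : ℕ} (a : FormOn m M k) (b : FormOn m M l) :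
    FormOn m M (k + l) :=
  fun x => wedgeAlt (a x) (b x)

/-- The base region of the parametrization of the simplex. -/
def baseSimplex (n : ℕ) : Set (Fin n → ℝ) := {y | (∀ j, 0 ≤ y j) ∧ ∑ j, y j ≤ 1}

/-- Parametrization `y ↦ (1 - Σy, y)` of `T^n` over the base region. -/
def simplexParam (n : ℕ) (y : Fin n → ℝ) : Vec (n + 1) := Fin.cons (1 - ∑ j, y j) y

lemma simplexParam_mem {n : ℕ} {y : Fin n → ℝ} (h : y ∈ baseSimplex n) :
    simplexParam n y ∈ simplexSet (n + 1) := by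
  constructor
  · intro i
    refine Fin.cases ?_ ?_ i
    · simpa [simplexParam] using sub_nonneg.mpr h.2
    · intro j; simpa [simplexParam] using h.1 j
  · simp [simplexParam, Fin.sum_cons]

/-- The coordinate tangent vectors `∂x/∂y_j = e_{j+1} - e_0` of the parametrization,
a positively oriented frame for the orientation of `T^n` induced from the outward-normal
orientation of `S^n` via `Φ`. -/
def simplexTangent (n : ℕ) (j : Fin n) : Vec (n + 1) :=
  Fin.cons (-1) (Pi.single j 1)

open Classical in
/-- The integral of an `n`-form over the oriented simplex `T^n`. -/
def integralSimplex (n : ℕ) (ω : FormOn (n + 1) (simplexSet (n + 1)) n) : ℝ :=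
  ∫ y : Fin n → ℝ,
    if h : y ∈ baseSimplex n then ω ⟨simplexParam n y, simplexParam_mem h⟩ (simplexTangent n)
    else 0

/-- Forms on a subset that genuinely are pullbacks to the simplex: they vanish in the
normal directions (canonical representatives). -/
def TangentialSim (m k : ℕ) (a : FormOn m (simplexSet m) k) : Prop :=
  ∀ x, (a x).compLinearMap (projSim m) = a x

/-- Continuity of a form on a subset. -/
def ContFormOn (m : ℕ) (M : Set (Vec m)) (k : ℕ) (a : FormOn m M k) : Prop :=
  ∀ v : Fin k → Vec m, Continuous fun x : M => a x v

/-- The Riemannian volume form of the round sphere `S^{m-1}` (outward-normal orientation),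
i.e. the restriction of `⋆_{ℝ^m} ν`. -/
def volSph (m : ℕ) : FormOn m (sphereSet m) (m - 1) :=
  fun u => (starAlt m 1 (nuForm m u.1)).compLinearMap (projSph m u.1)

/-!
Since `dΦ_u(u) = 2 Φ(u)`, `Φ^*(i_X β) = ½ i_U (Φ^*β)`, so `Φ^*` maps `P_r⁻Λ^k(T^n)` into
`P_{2r+k}⁻Λ^k(S^n)`; the image is even, and it vanishes on `Γ` when the trace on `∂T^n` does,
because `dΦ` maps `T_uS^n` into the tangent space of the face `{x_i = 0}` when `u_i = 0`.
Conversely, over the relative interior of each face `Φ` is a submersion, and these relative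
interiors are dense, which gives injectivity and the vanishing trace of preimages.
For surjectivity, average an ambient representative of an even `α` over the `2^{n+1}` sign
changes, which does not change its restriction to `S^n`. The coefficient of
`du_{g 0} ∧ ⋯ ∧ du_{g k}` in the resulting even form is odd exactly in `u_{g 0}, …, u_{g k}`,
hence is `u_{g 0} ⋯ u_{g k}` times a polynomial in the squares `u_i²`, which is precisely the
shape of the coefficients of a pullback `Φ^*C`.
-/

section Coordinates

variable {m k : ℕ}

lemma FormOn.apply_congr {M : Set (Vec m)} (a : FormOn m M k) {x y : M} (hxy : (x : Vec m) = y)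
    {v w : Fin k → Vec m} (hvw : v = w) : a x v = a y w := by
  rw [Subtype.ext hxy, hvw]

lemma resSph_apply (G : Form m k) (u : sphereSet m) (v : Fin k → Vec m) :
    resSph m k G u v = G u (fun a => projSph m u (v a)) := rfl

lemma iU_apply (β : Form m (k + 1)) (x : Vec m) (v : Fin k → Vec m) :
    iU β x v = β x (Matrix.vecCons x v) := rfl

lemma map_vecCons {X Y : Type*} (f : X → Y) (x : X) (v : Fin k → X) :
    (fun a => f (Matrix.vecCons x v a)) = Matrix.vecCons (f x) (fun a => f (v a)) := by
  funext a
  refine Fin.cases ?_ (fun b => ?_) a <;> simp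

lemma resSim_apply (F : Form m k) (x : simplexSet m) (v : Fin k → Vec m) :
    resSim m k F x v = F x (fun a => projSim m (v a)) := rfl

lemma phiPullTS_apply (a : FormOn m (simplexSet m) k) (u : sphereSet m) (v : Fin k → Vec m) :
    phiPullTS m k a u v
      = a ⟨Phi m u, phi_mem_simplex u.2⟩ (fun j => dPhi m u (projSph m u (v j))) :=
  rfl


lemma dotLin_apply (u v : Vec m) : dotLin m u v = ∑ i, u i * v i := by
  simp [dotLin, LinearMap.sum_apply]

lemma projSph_apply (u v : Vec m) (i : Fin m) :
    projSph m u v i = v i - (∑ l, u l * v l) * u i := by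
  simp [projSph, dotLin_apply]

lemma projSim_apply (v : Vec m) (i : Fin m) :
    projSim m v i = v i - (m : ℝ)⁻¹ * ∑ l, v l := by
  simp [projSim, sumLin, LinearMap.sum_apply]

lemma dPhi_apply (u v : Vec m) (i : Fin m) : dPhi m u v i = 2 * u i * v i := by
  simp [dPhi]

lemma reflLin_apply (i : Fin m) (v : Vec m) : reflLin m i v = reflFun m i v := by
  funext j
  simp only [reflLin, reflFun, LinearMap.pi_apply]
  split_ifs <;> simp

lemma projSim_of_sum_eq_zero {v : Vec m} (h : ∑ i, v i = 0) : projSim m v = v := by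
  funext i
  rw [projSim_apply, h, mul_zero, sub_zero]

lemma sum_projSim (hm : m ≠ 0) (v : Vec m) : ∑ i, projSim m v i = 0 := by
  simp only [projSim_apply, Finset.sum_sub_distrib, Finset.sum_const, Finset.card_univ,
    Fintype.card_fin, nsmul_eq_mul]
  field_simp
  ring

lemma sum_dPhi_projSph {u : Vec m} (hu : u ∈ sphereSet m) (v : Vec m) :
    ∑ i, dPhi m u (projSph m u v) i = 0 := by
  have hsum : ∑ i, u i ^ 2 = 1 := hu
  simp only [dPhi_apply, projSph_apply, mul_sub, Finset.sum_sub_distrib]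
  have h : ∑ x, 2 * u x * ((∑ l, u l * v l) * u x) = 2 * (∑ l, u l * v l) * ∑ i, u i ^ 2 := by
    rw [Finset.mul_sum]
    exact Finset.sum_congr rfl fun _ _ => by ring
  rw [h, hsum, Finset.mul_sum]
  simp only [mul_assoc, mul_one, sub_self]

lemma dPhi_self (u : Vec m) : dPhi m u u = (2 : ℝ) • Phi m u := by
  funext i
  simp only [dPhi_apply, Pi.smul_apply, Phi, smul_eq_mul]
  ring

end Coordinates

section AlternatingCoordinates

variable {m j : ℕ}

lemma alternatingMap_apply_eq_sum (F : Vec m [⋀^Fin j]→ₗ[ℝ] ℝ) (v : Fin j → Vec m) :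
    F v = ∑ g : Fin j → Fin m, (∏ a, v a (g a)) • F (fun a => Pi.single (g a) 1) := by
  have hv : v = fun a => ∑ i, v a i • (Pi.single i 1 : Vec m) := by
    funext a l
    simp [Finset.sum_apply, Pi.single_apply]
  conv_lhs => rw [hv]
  rw [show F (fun a => ∑ i, v a i • (Pi.single i 1 : Vec m))
      = F.toMultilinearMap (fun a => ∑ i, v a i • (Pi.single i 1 : Vec m)) from rfl,
    F.toMultilinearMap.map_sum]
  exact Finset.sum_congr rfl fun g _ => F.toMultilinearMap.map_smul_univ _ _

lemma alternatingMap_sum_apply {ι : Type*} (t : Finset ι) (F : ι → Vec m [⋀^Fin j]→ₗ[ℝ] ℝ)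
    (v : Fin j → Vec m) : (∑ i ∈ t, F i) v = ∑ i ∈ t, F i v := by
  classical
  induction t using Finset.induction_on with
  | empty => simp
  | insert a t ha ih => simp [Finset.sum_insert ha, ih]

/-- `du_{g 0} ∧ ⋯ ∧ du_{g (j-1)}`. -/
def coordDet (g : Fin j → Fin m) : Vec m [⋀^Fin j]→ₗ[ℝ] ℝ :=
  Matrix.detRowAlternating.compLinearMap (LinearMap.pi fun b => LinearMap.proj (g b))

lemma coordDet_apply (g : Fin j → Fin m) (v : Fin j → Vec m) :
    coordDet g v = (Matrix.of fun a b => v a (g b)).det := rfl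

lemma coordDet_mul_left (g : Fin j → Fin m) (c : Vec m) (v : Fin j → Vec m) :
    coordDet g (fun a i => c i * v a i) = (∏ b, c (g b)) * coordDet g v := by
  rw [coordDet_apply, coordDet_apply, ← Matrix.det_mul_row]
  rfl

lemma alternatingMap_apply_eq_sum_coordDet (F : Vec m [⋀^Fin j]→ₗ[ℝ] ℝ) (v : Fin j → Vec m) :
    F v = (j.factorial : ℝ)⁻¹ *
      ∑ g : Fin j → Fin m, F (fun a => Pi.single (g a) 1) * coordDet g v := by
  suffices h : ∑ g : Fin j → Fin m, F (fun a => Pi.single (g a) 1) * coordDet g v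
      = j.factorial * F v by
    rw [h, inv_mul_cancel_left₀ (by positivity)]
  have hperm : ∀ σ : Equiv.Perm (Fin j), ∑ g : Fin j → Fin m,
      (Equiv.Perm.sign σ : ℝ) * (F (fun a => Pi.single (g a) 1) * ∏ b, v (σ b) (g b))
        = ∑ h : Fin j → Fin m, F (fun a => Pi.single (h a) 1) * ∏ b, v b (h b) := by
    intro σ
    refine (Fintype.sum_bijective (fun h => h ∘ σ)
      (Equiv.arrowCongr σ.symm (Equiv.refl (Fin m))).bijective _ _ fun h => ?_).symm
    have hF : F (fun a => Pi.single ((h ∘ σ) a) 1)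
        = Equiv.Perm.sign σ • F (fun a => Pi.single (h a) 1) :=
      F.map_perm (fun a => Pi.single (h a) 1) σ
    rw [hF, show ∏ b, v (σ b) ((h ∘ σ) b) = ∏ b, v b (h b) from
      Equiv.prod_comp σ (fun b => v b (h b)), Units.smul_def, zsmul_eq_mul]
    rcases Int.units_eq_one_or (Equiv.Perm.sign σ) with hs | hs <;> simp [hs]
  calc ∑ g : Fin j → Fin m, F (fun a => Pi.single (g a) 1) * coordDet g v
      = ∑ σ : Equiv.Perm (Fin j), ∑ g : Fin j → Fin m,
          (Equiv.Perm.sign σ : ℝ) * (F (fun a => Pi.single (g a) 1) * ∏ b, v (σ b) (g b)) := by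
        simp only [coordDet_apply, Matrix.det_apply, Finset.mul_sum, Units.smul_def,
          zsmul_eq_mul, Matrix.of_apply]
        rw [Finset.sum_comm]
        refine Finset.sum_congr rfl fun σ _ => Finset.sum_congr rfl fun g _ => ?_
        ring
    _ = j.factorial * F v := by
        rw [Finset.sum_congr rfl fun σ _ => hperm σ, Finset.sum_const, Finset.card_univ,
          Fintype.card_perm, Fintype.card_fin, nsmul_eq_mul, alternatingMap_apply_eq_sum F v]
        simp only [smul_eq_mul, mul_comm]

end AlternatingCoordinates

namespace MvPolynomial

variable {σ R : Type*}

section ScaleVars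

variable [CommSemiring R]

def scaleVars (a : σ → R) : MvPolynomial σ R →ₐ[R] MvPolynomial σ R :=
  bind₁ fun i => C (a i) * X i

lemma scaleVars_monomial (a : σ → R) (d : σ →₀ ℕ) (c : R) :
    scaleVars a (monomial d c) = monomial d ((d.prod fun i n => a i ^ n) * c) := by
  rw [scaleVars, bind₁_monomial, monomial_eq, Finsupp.prod, Finsupp.prod]
  simp only [mul_pow, Finset.prod_mul_distrib, ← map_pow, ← map_prod, map_mul]
  ring

lemma coeff_scaleVars (a : σ → R) (p : MvPolynomial σ R) (d : σ →₀ ℕ) :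
    coeff d (scaleVars a p) = (d.prod fun i n => a i ^ n) * coeff d p := by
  classical
  induction p using induction_on' with
  | monomial e c =>
    rw [scaleVars_monomial, coeff_monomial, coeff_monomial]
    split_ifs with h
    · rw [h]
    · rw [mul_zero]
  | add p q hp hq => rw [map_add, coeff_add, coeff_add, hp, hq, mul_add]

lemma eval_scaleVars (a u : σ → R) (p : MvPolynomial σ R) :
    eval u (scaleVars a p) = eval (a * u) p := by
  have := eval₂Hom_bind₁ (RingHom.id R) u (fun i => C (a i) * X i) p
  simp only [coe_eval₂Hom, eval₂_mul, eval₂_C, eval₂_X, RingHom.id_apply] at this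
  exact this

lemma totalDegree_scaleVars_le (a : σ → R) (p : MvPolynomial σ R) :
    (scaleVars a p).totalDegree ≤ p.totalDegree :=
  totalDegree_le_of_support_subset fun d hd => by
    rw [mem_support_iff, coeff_scaleVars] at hd
    exact mem_support_iff.2 (right_ne_zero_of_mul hd)

end ScaleVars

lemma prod_pow_eq_of_eval_mul [CommRing R] [IsDomain R] [Infinite R] {a : σ → R} {c : R}
    {p : MvPolynomial σ R} (h : ∀ u, eval (a * u) p = c * eval u p) {d : σ →₀ ℕ}
    (hd : d ∈ p.support) : (d.prod fun i n => a i ^ n) = c := by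
  have hp : scaleVars a p = c • p := funext fun u => by rw [eval_scaleVars, h, smul_eval]
  have := congrArg (coeff d) hp
  rw [coeff_scaleVars, coeff_smul, smul_eq_mul] at this
  exact mul_right_cancel₀ (mem_support_iff.1 hd) this

lemma prod_X_eq_monomial [CommSemiring R] (I : Finset σ) :
    (∏ i ∈ I, X i : MvPolynomial σ R) = monomial (∑ i ∈ I, Finsupp.single i 1) 1 := by
  rw [monomial_sum_one]
  rfl

lemma exists_eq_prod_X_mul_expand [CommSemiring R] (I : Finset σ) {p : MvPolynomial σ R}
    (hp : ∀ d ∈ p.support, ∀ i, i ∈ I ↔ Odd (d i)) :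
    ∃ q, p = (∏ i ∈ I, X i) * expand 2 q := by
  classical
  let half : (σ →₀ ℕ) → (σ →₀ ℕ) := Finsupp.mapRange (· / 2) (Nat.zero_div 2)
  refine ⟨∑ d ∈ p.support, monomial (half d) (coeff d p), ?_⟩
  conv_lhs => rw [p.as_sum]
  rw [map_sum, Finset.mul_sum]
  refine Finset.sum_congr rfl fun d hd => ?_
  rw [expand_monomial, prod_X_eq_monomial, monomial_mul, one_mul]
  congr 2
  ext i
  have hparity := hp d hd i
  simp only [Finsupp.coe_add, Finsupp.coe_finsetSum, Pi.add_apply, Finset.sum_apply,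
    Finsupp.single_apply, Finset.sum_ite_eq', Finsupp.smul_apply, smul_eq_mul, half,
    Finsupp.mapRange_apply]
  split_ifs with hi
  · obtain ⟨t, ht⟩ := hparity.1 hi
    omega
  · obtain ⟨t, ht⟩ := Nat.not_odd_iff_even.1 (hi ∘ hparity.2)
    omega

lemma totalDegree_le_of_eq_prod_X_mul_expand [CommRing R] [IsDomain R] {I : Finset σ}
    {p q : MvPolynomial σ R} (h : p = (∏ i ∈ I, X i) * expand 2 q) {s : ℕ}
    (hp : p.totalDegree ≤ 2 * s + I.card) : q.totalDegree ≤ s := by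
  classical
  rcases eq_or_ne q 0 with rfl | hq
  · simp
  rw [h, prod_X_eq_monomial, totalDegree_mul_of_isDomain (by simp) ((expand_ne_zero two_pos).2 hq),
    totalDegree_monomial _ one_ne_zero, totalDegree_expand] at hp
  have hI : ((∑ i ∈ I, Finsupp.single i 1 : σ →₀ ℕ).sum fun _ e => e) = I.card := by
    change Finsupp.degree _ = _
    simp [map_sum]
  omega

end MvPolynomial

section PolynomialForms

open MvPolynomial

variable {m j : ℕ}

lemma degLE_natCast_iff {s : ℕ} {p : MvPolynomial (Fin m) ℝ} :
    degLE (s : ℤ) p ↔ p.totalDegree ≤ s := by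
  refine ⟨fun h => Finset.sup_le fun d hd => by exact_mod_cast h d hd, fun h d hd => ?_⟩
  exact_mod_cast (le_totalDegree hd).trans h

lemma mem_PL_natCast_iff {s : ℕ} {F : Form m j} :
    F ∈ PL m j s ↔ ∀ g : Fin j → Fin m, ∃ p : MvPolynomial (Fin m) ℝ,
      p.totalDegree ≤ s ∧ ∀ x, F x (fun a => Pi.single (g a) 1) = eval x p := by
  simp only [PL, Set.mem_ofPred_eq, degLE_natCast_iff]
  refine ⟨fun h g => h _, fun h v => ?_⟩
  choose p hdeg hval using h
  refine ⟨∑ g, (∏ a, v a (g a)) • p g, ?_, fun x => ?_⟩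
  · rw [← mem_restrictTotalDegree]
    exact Submodule.sum_mem _ fun g _ =>
      Submodule.smul_mem _ _ ((mem_restrictTotalDegree _ _ _).2 (hdeg g))
  · simp only [alternatingMap_apply_eq_sum (F x) v, hval, map_sum, smul_eval, smul_eq_mul]

def polyForms (m j s : ℕ) : Submodule ℝ (Form m j) where
  carrier := PL m j s
  add_mem' {F G} hF hG := by
    rw [mem_PL_natCast_iff] at hF hG ⊢
    intro g
    obtain ⟨p, hp, hpF⟩ := hF g
    obtain ⟨q, hq, hqG⟩ := hG g
    exact ⟨p + q, (totalDegree_add _ _).trans (max_le hp hq), fun x => by simp [hpF, hqG]⟩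
  zero_mem' := mem_PL_natCast_iff.2 fun _ => ⟨0, by simp, fun _ => by simp⟩
  smul_mem' c F hF := by
    rw [mem_PL_natCast_iff] at hF ⊢
    intro g
    obtain ⟨p, hp, hpF⟩ := hF g
    exact ⟨c • p, (totalDegree_smul_le _ _).trans hp, fun x => by simp [hpF]⟩

lemma continuous_apply_of_mem_PL {s : ℤ} {F : Form m j} (hF : F ∈ PL m j s)
    (v : Fin j → Vec m) : Continuous fun x => F x v := by
  obtain ⟨p, -, hp⟩ := hF v
  simpa only [hp] using continuous_eval p

lemma sum_eval_smul_mem_PL {ι : Type*} [Fintype ι] {s : ℕ} (Q : ι → MvPolynomial (Fin m) ℝ)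
    (A : ι → Vec m [⋀^Fin j]→ₗ[ℝ] ℝ) (hQ : ∀ i, (Q i).totalDegree ≤ s) :
    (fun x => ∑ i, eval x (Q i) • A i) ∈ PL m j s := by
  intro v
  refine ⟨∑ i, A i v • Q i, degLE_natCast_iff.2 ?_, fun x => ?_⟩
  · rw [← mem_restrictTotalDegree]
    exact Submodule.sum_mem _ fun i _ =>
      Submodule.smul_mem _ _ ((mem_restrictTotalDegree _ _ _).2 (hQ i))
  · simp [alternatingMap_sum_apply, smul_eval, mul_comm]

lemma iU_mem_PL {k s : ℕ} {β : Form m (k + 1)} (hβ : β ∈ PL m (k + 1) s) :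
    iU β ∈ PL m k (s + 1 : ℕ) := by
  rw [mem_PL_natCast_iff] at *
  choose p hdeg hval using hβ
  intro h
  refine ⟨∑ g : Fin (k + 1) → Fin m,
    (∏ a : Fin k, (Pi.single (h a) 1 : Vec m) (g a.succ)) • (X (g 0) * p g), ?_, fun x => ?_⟩
  · rw [← mem_restrictTotalDegree]
    refine Submodule.sum_mem _ fun g _ => Submodule.smul_mem _ _ ?_
    rw [mem_restrictTotalDegree, add_comm s]
    exact (totalDegree_mul _ _).trans (add_le_add (totalDegree_X _).le (hdeg g))
  · rw [iU, AlternatingMap.curryLeft_apply_apply, alternatingMap_apply_eq_sum]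
    simp only [map_sum, smul_eval, eval_mul, eval_X, ← hval, Fin.prod_univ_succ,
      Matrix.cons_val_zero, Matrix.cons_val_succ, smul_eq_mul]
    exact Finset.sum_congr rfl fun g _ => by ring

lemma dPhi_single (u : Vec m) (i : Fin m) :
    dPhi m u (Pi.single i 1) = (2 * u i) • (Pi.single i 1 : Vec m) := by
  funext l
  rw [dPhi_apply]
  by_cases h : l = i
  · subst h; simp
  · simp [h]

lemma phiPull_apply_single (β : Form m j) (u : Vec m) (g : Fin j → Fin m) :
    phiPull m j β u (fun a => Pi.single (g a) 1)
      = (∏ a, 2 * u (g a)) * β (Phi m u) (fun a => Pi.single (g a) 1) := by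
  simp only [phiPull, AlternatingMap.compLinearMap_apply, dPhi_single]
  exact (β (Phi m u)).toMultilinearMap.map_smul_univ _ _

lemma phiPull_mem_PL {s : ℕ} {β : Form m j} (hβ : β ∈ PL m j s) :
    phiPull m j β ∈ PL m j (2 * s + j : ℕ) := by
  rw [mem_PL_natCast_iff] at *
  intro g
  obtain ⟨p, hdeg, hval⟩ := hβ g
  refine ⟨((2 : ℝ) ^ j • ∏ a, X (g a)) * expand 2 p, ?_, fun u => ?_⟩
  · refine (totalDegree_mul _ _).trans ?_
    rw [totalDegree_expand, add_comm, mul_comm]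
    refine add_le_add (Nat.mul_le_mul_left 2 hdeg)
      ((totalDegree_smul_le _ _).trans ((totalDegree_finsetProd _ _).trans ?_))
    simp
  · rw [phiPull_apply_single, hval, eval_mul, eval_expand, smul_eval, map_prod,
      Finset.prod_mul_distrib, Finset.prod_const, Finset.card_univ, Fintype.card_fin]
    simp only [eval_X]
    rfl

end PolynomialForms

section SignFlips

variable {m k : ℕ}

def signVec (s : Finset (Fin m)) : Vec m := fun j => if j ∈ s then -1 else 1

def signFlip (s : Finset (Fin m)) : Vec m →ₗ[ℝ] Vec m :=
  LinearMap.pi fun j => signVec s j • LinearMap.proj j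

lemma signFlip_apply (s : Finset (Fin m)) (v : Vec m) : signFlip s v = signVec s * v := by
  funext j
  simp [signFlip]

lemma signVec_mul_self (s : Finset (Fin m)) : signVec s * signVec s = 1 := by
  funext j
  simp only [signVec, Pi.mul_apply, Pi.one_apply]
  split_ifs <;> norm_num

lemma signVec_symmDiff (s t : Finset (Fin m)) :
    signVec (symmDiff s t) = signVec s * signVec t := by
  funext j
  simp only [signVec, Finset.mem_symmDiff, Pi.mul_apply]
  by_cases hs : j ∈ s <;> by_cases ht : j ∈ t <;> simp [hs, ht]

lemma reflFun_eq_signFlip (i : Fin m) (u : Vec m) : reflFun m i u = signFlip {i} u := by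
  funext j
  simp [reflFun, signFlip_apply, signVec]

lemma reflLin_eq_signFlip (i : Fin m) : reflLin m i = signFlip {i} :=
  LinearMap.ext fun v => by rw [reflLin_apply, reflFun_eq_signFlip]

lemma signFlip_single (s : Finset (Fin m)) (i : Fin m) :
    signFlip s (Pi.single i 1) = signVec s i • (Pi.single i 1 : Vec m) := by
  funext j
  by_cases h : j = i
  · subst h; simp [signFlip_apply]
  · simp [signFlip_apply, h]

lemma Phi_signFlip (s : Finset (Fin m)) (u : Vec m) : Phi m (signFlip s u) = Phi m u := by
  funext j
  simp only [Phi, signFlip_apply, Pi.mul_apply, mul_pow, signVec]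
  split_ifs <;> norm_num

lemma signFlip_mem_sphere (s : Finset (Fin m)) {u : Vec m} (hu : u ∈ sphereSet m) :
    signFlip s u ∈ sphereSet m :=
  (congrArg (fun x : Vec m => ∑ i, x i) (Phi_signFlip s u)).trans hu

lemma signFlip_projSph (s : Finset (Fin m)) (u v : Vec m) :
    signFlip s (projSph m u v) = projSph m (signFlip s u) (signFlip s v) := by
  have hdot : ∑ l, (signVec s * u) l * (signVec s * v) l = ∑ l, u l * v l := by
    refine Finset.sum_congr rfl fun l _ => ?_
    have := congrFun (signVec_mul_self s) l
    simp only [Pi.mul_apply, Pi.one_apply] at this ⊢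
    linear_combination u l * v l * this
  funext j
  rw [signFlip_apply, signFlip_apply, signFlip_apply, Pi.mul_apply, projSph_apply, projSph_apply,
    hdot, Pi.mul_apply, Pi.mul_apply]
  ring

def linPull (L : Vec m →ₗ[ℝ] Vec m) (β : Form m k) : Form m k :=
  fun x => (β (L x)).compLinearMap L

lemma linPull_apply (L : Vec m →ₗ[ℝ] Vec m) (β : Form m k) (x : Vec m) (v : Fin k → Vec m) :
    linPull L β x v = β (L x) (fun a => L (v a)) := rfl

lemma linPull_signFlip_apply_single (s : Finset (Fin m)) (β : Form m k) (x : Vec m)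
    (g : Fin k → Fin m) :
    linPull (signFlip s) β x (fun a => Pi.single (g a) 1)
      = (∏ a, signVec s (g a)) * β (signFlip s x) (fun a => Pi.single (g a) 1) := by
  simp only [linPull_apply, signFlip_single]
  exact (β _).toMultilinearMap.map_smul_univ _ _

open MvPolynomial in
lemma linPull_signFlip_mem_PL {s : ℕ} (t : Finset (Fin m)) {β : Form m k}
    (hβ : β ∈ PL m k s) : linPull (signFlip t) β ∈ PL m k s := by
  rw [mem_PL_natCast_iff] at *
  intro g
  obtain ⟨p, hdeg, hval⟩ := hβ g
  refine ⟨(∏ a, signVec t (g a)) • scaleVars (signVec t) p,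
    (totalDegree_smul_le _ _).trans ((totalDegree_scaleVars_le _ _).trans hdeg), fun x => ?_⟩
  rw [linPull_signFlip_apply_single, hval, smul_eval, eval_scaleVars, signFlip_apply]

def evenPart (β : Form m k) : Form m k :=
  (2 ^ m : ℝ)⁻¹ • ∑ s : Finset (Fin m), linPull (signFlip s) β

lemma evenPart_apply (β : Form m k) (x : Vec m) (v : Fin k → Vec m) :
    evenPart β x v
      = (2 ^ m : ℝ)⁻¹ * ∑ s : Finset (Fin m), β (signFlip s x) (fun a => signFlip s (v a)) := by
  simp [evenPart, alternatingMap_sum_apply, linPull_apply]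

lemma evenPart_mem_PL {s : ℕ} {β : Form m k} (hβ : β ∈ PL m k s) : evenPart β ∈ PL m k s :=
  (polyForms m k s).smul_mem _ <| (polyForms m k s).sum_mem fun t _ => linPull_signFlip_mem_PL t hβ

lemma isEven_evenPart (β : Form m k) : IsEven m k (evenPart β) := by
  intro i
  funext x
  ext v
  simp only [reflPull, AlternatingMap.compLinearMap_apply, evenPart_apply, reflFun_eq_signFlip,
    reflLin_eq_signFlip]
  congr 1
  refine Fintype.sum_bijective (fun s => symmDiff s {i})
    (Function.Involutive.bijective fun s => symmDiff_symmDiff_cancel_right {i} s) _ _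
    fun s => ?_
  simp only [signFlip_apply, signVec_symmDiff, mul_assoc]

end SignFlips

section EvenSphere

variable {m k : ℕ}

lemma signFlip_insert {s : Finset (Fin m)} {i : Fin m} (hi : i ∉ s) (v : Vec m) :
    signFlip (insert i s) v = signFlip {i} (signFlip s v) := by
  funext j
  simp only [signFlip_apply, signVec, Pi.mul_apply, Finset.mem_insert, Finset.mem_singleton]
  by_cases hj : j = i
  · subst hj; simp [hi]
  · simp [hj]

lemma IsEvenSph.apply_signFlip {α : FormOn m (sphereSet m) k} (he : IsEvenSph m k α)
    (s : Finset (Fin m)) (u : sphereSet m) (v : Fin k → Vec m) :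
    α ⟨signFlip s u, signFlip_mem_sphere s u.2⟩ (fun a => signFlip s (v a)) = α u v := by
  classical
  induction s using Finset.induction_on with
  | empty =>
    have h1 : signFlip (∅ : Finset (Fin m)) = LinearMap.id :=
      LinearMap.ext fun w => by funext j; simp [signFlip_apply, signVec]
    exact α.apply_congr (show signFlip ∅ u.1 = u.1 by rw [h1]; rfl) (by simp [h1])
  | insert i s hi ih =>
    calc _ = reflPullSph m k i α ⟨signFlip s u, signFlip_mem_sphere s u.2⟩
          (fun a => signFlip s (v a)) := by
          simp only [reflPullSph, AlternatingMap.compLinearMap_apply]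
          exact α.apply_congr (by simp [signFlip_insert hi, reflFun_eq_signFlip])
            (by simp [signFlip_insert hi, reflLin_eq_signFlip])
      _ = α u v := by rw [he i, ih]

lemma resSph_iU_evenPart {β : Form m (k + 1)} (he : IsEvenSph m k (resSph m k (iU β))) :
    resSph m k (iU (evenPart β)) = resSph m k (iU β) := by
  funext u
  ext v
  have hterm : ∀ s : Finset (Fin m), β (signFlip s u)
      (fun a => signFlip s (Matrix.vecCons u.1 (fun b => projSph m u (v b)) a))
        = resSph m k (iU β) u v := fun s => by
    rw [← he.apply_signFlip s, resSph_apply, iU_apply, map_vecCons]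
    simp only [signFlip_projSph]
  rw [resSph_apply, iU_apply, evenPart_apply, Finset.sum_congr rfl fun s _ => hterm s,
    Finset.sum_const, Finset.card_univ, Fintype.card_finset, Fintype.card_fin, nsmul_eq_mul]
  push_cast
  exact inv_mul_cancel_left₀ (by positivity) _

end EvenSphere

section EvenForms

open MvPolynomial

variable {m j : ℕ}

lemma reflPull_eq_linPull (i : Fin m) (β : Form m j) :
    reflPull m j i β = linPull (signFlip {i}) β := by
  funext x
  simp only [reflPull, linPull, reflFun_eq_signFlip, reflLin_eq_signFlip]

lemma prod_signVec_singleton_of_injective {g : Fin j → Fin m} (hg : Function.Injective g)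
    (i : Fin m) :
    ∏ a, signVec {i} (g a) = signVec (Finset.univ.image g) i := by
  by_cases hi : i ∈ Finset.univ.image g
  · obtain ⟨a₀, -, rfl⟩ := Finset.mem_image.1 hi
    rw [Finset.prod_eq_single a₀ (fun b _ hb => by simp [signVec, hg.ne hb]) (by simp)]
    simp [signVec]
  · rw [Finset.prod_eq_one fun a _ => ?_]
    · simp [signVec, hi]
    · simp only [signVec, Finset.mem_singleton]
      rw [if_neg fun h => hi (Finset.mem_image.2 ⟨a, Finset.mem_univ _, h⟩)]

lemma Finsupp.prod_signVec_singleton (d : Fin m →₀ ℕ) (i : Fin m) :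
    (d.prod fun l n => signVec {i} l ^ n) = (-1) ^ d i :=
  (Finsupp.prod_eq_single i (fun l _ hl => by simp [signVec, hl]) (by simp)).trans
    (by simp [signVec])

lemma IsEven.apply_signFlip_single {F : Form m j} (he : IsEven m j F) (i : Fin m) (u : Vec m)
    (g : Fin j → Fin m) :
    F (signFlip {i} u) (fun a => Pi.single (g a) 1)
      = (∏ a, signVec {i} (g a)) * F u (fun a => Pi.single (g a) 1) := by
  have h := linPull_signFlip_apply_single {i} F u g
  rw [← reflPull_eq_linPull, he i] at h
  have hsq : (∏ a, signVec {i} (g a)) * ∏ a, signVec {i} (g a) = 1 := by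
    rw [← Finset.prod_mul_distrib]
    exact Finset.prod_eq_one fun a _ => congrFun (signVec_mul_self {i}) (g a)
  rw [h, ← mul_assoc, hsq, one_mul]

lemma IsEven.odd_iff_mem_image {F : Form m j} (he : IsEven m j F) {g : Fin j → Fin m}
    (hg : Function.Injective g) {p : MvPolynomial (Fin m) ℝ}
    (hp : ∀ x, F x (fun a => Pi.single (g a) 1) = eval x p) :
    ∀ d ∈ p.support, ∀ i, i ∈ Finset.univ.image g ↔ Odd (d i) := by
  intro d hd i
  have hsign := prod_pow_eq_of_eval_mul (a := signVec {i})
    (c := signVec (Finset.univ.image g) i) (fun u => by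
    rw [← hp, ← hp, ← signFlip_apply, he.apply_signFlip_single,
      prod_signVec_singleton_of_injective hg]) hd
  rw [Finsupp.prod_signVec_singleton] at hsign
  by_cases hi : i ∈ Finset.univ.image g
  · simp only [signVec, hi, if_true] at hsign
    exact iff_of_true hi ((neg_one_pow_eq_neg_one_iff_odd (by norm_num)).1 hsign)
  · simp only [signVec, hi, if_false] at hsign
    refine iff_of_false hi fun hodd => ?_
    rw [hodd.neg_one_pow] at hsign
    norm_num at hsign

lemma IsEven.exists_apply_single_eq {s : ℕ} {F : Form m j} (hF : F ∈ PL m j (2 * s + j : ℕ))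
    (he : IsEven m j F) (g : Fin j → Fin m) :
    ∃ Q : MvPolynomial (Fin m) ℝ, Q.totalDegree ≤ s ∧ ∀ u,
      F u (fun a => Pi.single (g a) 1) = (∏ a, 2 * u (g a)) * eval (Phi m u) Q := by
  by_cases hg : Function.Injective g
  · obtain ⟨p, hpdeg, hp⟩ := mem_PL_natCast_iff.1 hF g
    obtain ⟨q, hpq⟩ := exists_eq_prod_X_mul_expand _ (he.odd_iff_mem_image hg hp)
    have hcard : (Finset.univ.image g).card = j := by
      rw [Finset.card_image_of_injective _ hg, Finset.card_univ, Fintype.card_fin]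
    refine ⟨(2 ^ j : ℝ)⁻¹ • q,
      (totalDegree_smul_le _ _).trans
        (totalDegree_le_of_eq_prod_X_mul_expand hpq (hcard.symm ▸ hpdeg)),
      fun u => ?_⟩
    rw [hp, hpq, eval_mul, eval_expand, smul_eval, map_prod,
      Finset.prod_image fun a _ b _ h => hg h,
      Finset.prod_mul_distrib, Finset.prod_const, Finset.card_univ, Fintype.card_fin]
    simp only [eval_X]
    field_simp
    rfl
  · obtain ⟨a, b, hab, hne⟩ := Function.not_injective_iff.1 hg
    exact ⟨0, by simp, fun u => by
      simpa using (F u).map_eq_zero_of_eq (fun a => Pi.single (g a) 1) (by rw [hab]) hne⟩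

theorem exists_phiPull_eq_of_isEven {s : ℕ} {F : Form m j} (hF : F ∈ PL m j (2 * s + j : ℕ))
    (he : IsEven m j F) : ∃ C ∈ PL m j s, phiPull m j C = F := by
  choose Q hQdeg hFQ using he.exists_apply_single_eq hF
  refine ⟨fun x => ∑ g, eval x (Q g) • ((j.factorial : ℝ)⁻¹ • coordDet g),
    sum_eval_smul_mem_PL _ _ hQdeg, ?_⟩
  funext u
  ext w
  have hdPhi : (fun a => dPhi m u (w a)) = fun a i => (2 * u i) * w a i :=
    funext fun a => funext fun i => dPhi_apply u (w a) i
  simp only [phiPull, AlternatingMap.compLinearMap_apply, alternatingMap_sum_apply,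
    AlternatingMap.smul_apply, smul_eq_mul, hdPhi, coordDet_mul_left]
  rw [alternatingMap_apply_eq_sum_coordDet (F u) w, Finset.mul_sum]
  exact Finset.sum_congr rfl fun g _ => by rw [hFQ]; ring

end EvenForms

section SimplexSphere

variable {m k : ℕ}

lemma phiPullTS_add (a b : FormOn m (simplexSet m) k) :
    phiPullTS m k (a + b) = phiPullTS m k a + phiPullTS m k b := by
  funext u
  ext v
  simp [phiPullTS_apply]

lemma phiPullTS_smul (c : ℝ) (a : FormOn m (simplexSet m) k) :
    phiPullTS m k (c • a) = c • phiPullTS m k a := by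
  funext u
  ext v
  simp [phiPullTS_apply]

lemma phiPullTS_resSim_apply (F : Form m k) (u : sphereSet m) (v : Fin k → Vec m) :
    phiPullTS m k (resSim m k F) u v = F (Phi m u) (fun j => dPhi m u (projSph m u (v j))) := by
  rw [phiPullTS_apply, resSim_apply]
  simp only [projSim_of_sum_eq_zero (sum_dPhi_projSph u.2 _)]

lemma phiPullTS_resSim_iU (β : Form m (k + 1)) :
    phiPullTS m k (resSim m k (iU β)) = resSph m k (iU ((2 : ℝ)⁻¹ • phiPull m (k + 1) β)) := by
  funext u
  ext v
  rw [phiPullTS_resSim_apply, resSph_apply, iU_apply, iU_apply]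
  simp only [Pi.smul_apply, AlternatingMap.smul_apply, phiPull, AlternatingMap.compLinearMap_apply,
    map_vecCons, dPhi_self, AlternatingMap.map_vecCons_smul, smul_eq_mul]
  rw [inv_mul_cancel_left₀ two_ne_zero]

lemma isEvenSph_phiPullTS (a : FormOn m (simplexSet m) k) : IsEvenSph m k (phiPullTS m k a) := by
  intro i
  funext u
  ext v
  simp only [reflPullSph, AlternatingMap.compLinearMap_apply, phiPullTS_apply]
  refine a.apply_congr (by simp [reflFun_eq_signFlip, Phi_signFlip]) ?_
  funext j
  simp only [reflFun_eq_signFlip, reflLin_eq_signFlip, ← signFlip_projSph]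
  funext l
  simp only [dPhi_apply, signFlip_apply, Pi.mul_apply]
  have := congrFun (signVec_mul_self {i}) l
  simp only [Pi.mul_apply, Pi.one_apply] at this
  linear_combination 2 * u.1 l * projSph m u (v j) l * this

lemma zeroOnGammaSph_phiPullTS {a : FormOn m (simplexSet m) k} (ha : vanishBdry m k a) :
    zeroOnGammaSph m k (phiPullTS m k a) := by
  rintro u ⟨i, hi⟩ v -
  rw [phiPullTS_apply]
  exact ha _ i (by simp [Phi, hi]) _ fun j => ⟨sum_dPhi_projSph u.2 _, by simp [dPhi_apply, hi]⟩

def openFace (s : Finset (Fin m)) : Set (Vec m) :=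
  {y | y ∈ simplexSet m ∧ (∀ i ∈ s, y i = 0) ∧ ∀ i ∉ s, 0 < y i}

lemma mem_closure_openFace {s : Finset (Fin m)} (hs : s.card < m) {x : Vec m}
    (hx : x ∈ simplexSet m) (hxs : ∀ i ∈ s, x i = 0) : x ∈ closure (openFace s) := by
  set c : Vec m := fun i => if i ∈ s then 0 else ((m : ℝ) - s.card)⁻¹
  have hc0 : 0 < ((m : ℝ) - s.card)⁻¹ := inv_pos.2 (sub_pos.2 (by exact_mod_cast hs))
  have hcsum : ∑ i, c i = 1 := by
    rw [Finset.sum_ite, Finset.sum_const_zero, zero_add, Finset.sum_const, nsmul_eq_mul,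
      Finset.filter_notMem_eq_sdiff, Finset.card_sdiff_of_subset (Finset.subset_univ _),
      Finset.card_univ, Fintype.card_fin, Nat.cast_sub hs.le]
    exact mul_inv_cancel₀ (sub_ne_zero.2 (by exact_mod_cast hs.ne'))
  have hcont : Continuous fun t : ℝ => (1 - t) • x + t • c := by fun_prop
  refine mem_closure_of_tendsto ((hcont.tendsto' 0 x (by simp)).mono_left
    (nhdsWithin_le_nhds (s := Set.Ioi 0))) ?_
  filter_upwards [Ioo_mem_nhdsGT one_pos] with t ⟨ht0, ht1⟩
  refine ⟨⟨fun i => ?_, ?_⟩, fun i hi => ?_, fun i hi => ?_⟩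
  · have hci : 0 ≤ c i := by
      simp only [c]
      split_ifs
      exacts [le_rfl, hc0.le]
    have := hx.1 i
    simp only [Pi.add_apply, Pi.smul_apply, smul_eq_mul]
    nlinarith
  · simp only [Pi.add_apply, Pi.smul_apply, smul_eq_mul, Finset.sum_add_distrib, ← Finset.mul_sum,
      hx.2, hcsum]
    ring
  · simp [c, hi, hxs i hi]
  · have := hx.1 i
    simp only [Pi.add_apply, Pi.smul_apply, smul_eq_mul, c, if_neg hi]
    nlinarith

end SimplexSphere

section Lifting

variable {m k : ℕ}

/-- Every tangent vector of the simplex at `y` that is tangent to all faces containing `y` is the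
image under `dΦ` of a tangent vector of the sphere at `√y`. -/
lemma exists_phiPullTS_resSim_eq {y : Vec m} (hy : y ∈ simplexSet m) {w : Fin k → Vec m}
    (hw : ∀ a, ∑ l, w a l = 0) (hwy : ∀ a l, y l = 0 → w a l = 0) :
    ∃ u : sphereSet m, Phi m u = y ∧ ∃ v : Fin k → Vec m, (∀ a, ∑ l, u.1 l * v a l = 0) ∧
      ∀ F : Form m k, phiPullTS m k (resSim m k F) u v = F y w := by
  have hPhi : Phi m (fun l => √(y l)) = y := funext fun l => Real.sq_sqrt (hy.1 l)
  have hu : (fun l => √(y l)) ∈ sphereSet m :=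
    (congrArg (fun x : Vec m => ∑ l, x l) hPhi).trans hy.2
  set u : Vec m := fun l => √(y l)
  set v : Fin k → Vec m := fun a l => w a l / (2 * u l)
  have huv : ∀ a l, u l * v a l = w a l / 2 := fun a l => by
    by_cases hl : y l = 0
    · simp [v, u, hl, hwy a l hl]
    · have : u l ≠ 0 := Real.sqrt_ne_zero'.2 (lt_of_le_of_ne (hy.1 l) (Ne.symm hl))
      simp only [v]
      field_simp
  have hdot : ∀ a, ∑ l, u l * v a l = 0 := fun a => by
    simp only [huv, ← Finset.sum_div, hw, zero_div]
  refine ⟨⟨u, hu⟩, hPhi, v, hdot, fun F => ?_⟩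
  rw [phiPullTS_resSim_apply]
  refine congrArg₂ (fun x => F x) hPhi (funext fun a => funext fun l => ?_)
  rw [dPhi_apply, projSph_apply, hdot, zero_mul, sub_zero, mul_assoc, huv]
  ring

lemma resSim_eq_of_phiPullTS_eq (hm : m ≠ 0) {F G : Form m k} {d e : ℤ} (hF : F ∈ PL m k d)
    (hG : G ∈ PL m k e)
    (h : phiPullTS m k (resSim m k F) = phiPullTS m k (resSim m k G)) :
    resSim m k F = resSim m k G := by
  funext x
  ext v
  rw [resSim_apply, resSim_apply]
  set w : Fin k → Vec m := fun a => projSim m (v a)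
  have hw : ∀ a, ∑ l, w a l = 0 := fun a => sum_projSim hm (v a)
  have heq : Set.EqOn (fun y => F y w) (fun y => G y w) (openFace ∅) := by
    rintro y ⟨hy, -, hpos⟩
    obtain ⟨u, -, v', -, hFG⟩ := exists_phiPullTS_resSim_eq hy hw
      fun a l hl => absurd hl (hpos l (Finset.notMem_empty l)).ne'
    simp only [← hFG, h]
  exact heq.closure (continuous_apply_of_mem_PL hF w) (continuous_apply_of_mem_PL hG w)
    (mem_closure_openFace (by simpa [Nat.pos_iff_ne_zero] using hm) x.2 (by simp))

lemma vanishBdry_resSim (hm : 2 ≤ m) {F : Form m k} {d : ℤ} (hF : F ∈ PL m k d)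
    (h : zeroOnGammaSph m k (phiPullTS m k (resSim m k F))) : vanishBdry m k (resSim m k F) := by
  intro x i hxi w hw
  rw [resSim_apply]
  simp only [projSim_of_sum_eq_zero (hw _).1]
  have hzero : Set.EqOn (fun y => F y w) 0 (openFace {i}) := by
    rintro y ⟨hy, hyi, hpos⟩
    obtain ⟨u, hPhi, v, hdot, hFu⟩ := exists_phiPullTS_resSim_eq hy (fun a => (hw a).1)
      fun a l hl => by
        by_cases hli : l = i
        · exact hli ▸ (hw a).2
        · exact absurd hl (hpos l (by simpa using hli)).ne'
    have hui : u.1 i = 0 := pow_eq_zero_iff two_ne_zero |>.1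
      ((congrFun hPhi i).trans (hyi i (Finset.mem_singleton_self i)))
    exact (hFu F).symm.trans (h u ⟨i, hui⟩ v hdot)
  exact hzero.closure (continuous_apply_of_mem_PL hF w) continuous_const
    (mem_closure_openFace (by simp; omega) x.2 (by simpa using hxi))

end Lifting

section Main

variable {m k r : ℕ}

lemma phiPull_smul (c : ℝ) (β : Form m k) : phiPull m k (c • β) = c • phiPull m k β := by
  funext u
  ext v
  simp [phiPull]

lemma PLm_subset_PL (hr : 1 ≤ r) : PLm m k r ⊆ PL m k r := by
  rintro _ ⟨β, hβ, rfl⟩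
  have h := iU_mem_PL (s := r - 1) (by convert hβ using 2; omega)
  rwa [Nat.sub_add_cancel hr] at h

lemma mapsTo_phiPullTS (hr : 1 ≤ r) :
    Set.MapsTo (phiPullTS m k) (PLmosim m k r)
      {α | α ∈ PLmsph m k (2 * (r : ℤ) + k) ∧ zeroOnGammaSph m k α ∧ IsEvenSph m k α} := by
  rintro _ ⟨⟨_, ⟨β, hβ, rfl⟩, rfl⟩, hbdry⟩
  refine ⟨⟨_, ⟨_, ?_, rfl⟩, (phiPullTS_resSim_iU β).symm⟩, zeroOnGammaSph_phiPullTS hbdry,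
    isEvenSph_phiPullTS _⟩
  have h : (2 : ℝ)⁻¹ • phiPull m (k + 1) β ∈ PL m (k + 1) (2 * (r - 1) + (k + 1) : ℕ) :=
    (polyForms _ _ _).smul_mem _ (phiPull_mem_PL (by convert hβ using 2; omega))
  convert h using 2
  omega

lemma injOn_phiPullTS (hr : 1 ≤ r) (hm : m ≠ 0) : Set.InjOn (phiPullTS m k) (PLmosim m k r) := by
  rintro _ ⟨⟨F, hF, rfl⟩, -⟩ _ ⟨⟨G, hG, rfl⟩, -⟩ h
  exact resSim_eq_of_phiPullTS_eq hm (PLm_subset_PL hr hF) (PLm_subset_PL hr hG) h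

lemma surjOn_phiPullTS (hm : 2 ≤ m) (hr : 1 ≤ r) :
    Set.SurjOn (phiPullTS m k) (PLmosim m k r)
      {α | α ∈ PLmsph m k (2 * (r : ℤ) + k) ∧ zeroOnGammaSph m k α ∧ IsEvenSph m k α} := by
  rintro _ ⟨⟨_, ⟨B, hB, rfl⟩, rfl⟩, hγ, he⟩
  obtain ⟨C, hC, hCB⟩ := exists_phiPull_eq_of_isEven (s := r - 1)
    (evenPart_mem_PL (by convert hB using 2; push_cast; omega)) (isEven_evenPart B)
  have hD : (2 : ℝ) • C ∈ PL m (k + 1) (r - 1 : ℕ) := (polyForms _ _ _).smul_mem 2 hC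
  have hpull : phiPullTS m k (resSim m k (iU ((2 : ℝ) • C))) = resSph m k (iU B) := by
    rw [phiPullTS_resSim_iU, phiPull_smul, smul_smul, inv_mul_cancel₀ two_ne_zero, one_smul, hCB,
      resSph_iU_evenPart he]
  refine ⟨_, ⟨⟨_, ⟨_, by convert hD using 2; omega, rfl⟩, rfl⟩, ?_⟩, hpull⟩
  exact vanishBdry_resSim hm (iU_mem_PL hD) (hpull ▸ hγ)

end Main

theorem stmt11_general (n k r : ℕ) (hn : 1 ≤ n) (hr : 1 ≤ r) :
    Set.BijOn (phiPullTS (n + 1) k) (PLmosim (n + 1) k (r : ℤ))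
      {α | α ∈ PLmsph (n + 1) k (2 * (r : ℤ) + k) ∧ zeroOnGammaSph (n + 1) k α ∧
          IsEvenSph (n + 1) k α} ∧
    (∀ a b, phiPullTS (n + 1) k (a + b) = phiPullTS (n + 1) k a + phiPullTS (n + 1) k b) ∧
    (∀ (c : ℝ) a, phiPullTS (n + 1) k (c • a) = c • phiPullTS (n + 1) k a) :=
  ⟨⟨mapsTo_phiPullTS hr, injOn_phiPullTS hr n.succ_ne_zero, surjOn_phiPullTS (by omega) hr⟩,
    phiPullTS_add, phiPullTS_smul⟩

theorem stmt11 (n k r : ℕ) (hn : 1 ≤ n) (hk : k ≤ n) (hr : 1 ≤ r) :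
    Set.BijOn (phiPullTS (n + 1) k) (PLmosim (n + 1) k (r : ℤ))
      {α | α ∈ PLmsph (n + 1) k (2 * (r : ℤ) + k) ∧ zeroOnGammaSph (n + 1) k α ∧
          IsEvenSph (n + 1) k α} ∧
    (∀ a b, phiPullTS (n + 1) k (a + b) = phiPullTS (n + 1) k a + phiPullTS (n + 1) k b) ∧
    (∀ (c : ℝ) a, phiPullTS (n + 1) k (c • a) = c • phiPullTS (n + 1) k a) :=
  stmt11_general n k r hn hr

end
end

section
/- Let n ≥ 0, 0 ≤ k ≤ n+1, and s ≥ 0. Then P̊̊_sΛ^k(ℝ^{n+1}) = u_N P_{s-n-1}Λ^k(ℝ^{n+1}); that is, a form α̂ ∈ P_sΛ^k(ℝ^{n+1}) vanishes identically (as an alternating tensor) at every point of Γ if and only if α̂ = u_N β̂ for some β̂ ∈ P_{s-n-1}Λ^k(ℝ^{n+1}). -/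
open scoped BigOperators
open MeasureTheory

noncomputable section

namespace Stmt15Aux

open MvPolynomial

/-- The all-ones exponent vector. -/
def oneF (m : ℕ) : Fin m →₀ ℕ := Finsupp.equivFunOnFinite.symm (fun _ => 1)

@[simp] lemma oneF_apply {m : ℕ} (j : Fin m) : oneF m j = 1 := rfl

/-- The bubble polynomial `∏ i, Xᵢ`. -/
def bubblePoly (m : ℕ) : MvPolynomial (Fin m) ℝ := ∏ i, X i

lemma bubblePoly_eq (m : ℕ) : bubblePoly m = monomial (oneF m) 1 := by
  rw [monomial_eq, map_one, one_mul, Finsupp.prod_fintype _ _ (fun j => pow_zero _)]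
  simp [bubblePoly]

lemma eval_bubblePoly {m : ℕ} (x : Vec m) : eval x (bubblePoly m) = bubble m x := by
  simp [bubblePoly, bubble]

lemma bubblePoly_ne_zero (m : ℕ) : bubblePoly m ≠ 0 := by
  rw [bubblePoly_eq]
  simp [monomial_eq_zero]

lemma degLE_mul {m : ℕ} {a b : ℤ} {p q : MvPolynomial (Fin m) ℝ}
    (hp : degLE a p) (hq : degLE b q) : degLE (a + b) (p * q) := by
  intro d hd
  classical
  have hd' := MvPolynomial.support_mul p q hd
  rw [Finset.mem_add] at hd'
  obtain ⟨d₁, hd₁, d₂, hd₂, rfl⟩ := hd'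
  have hsum : ((d₁ + d₂).sum fun _ e => e) = (d₁.sum fun _ e => e) + (d₂.sum fun _ e => e) :=
    Finsupp.sum_add_index' (fun _ => rfl) (fun _ _ _ => rfl)
  have h1 := hp d₁ hd₁
  have h2 := hq d₂ hd₂
  rw [hsum, Nat.cast_add]
  exact add_le_add h1 h2

lemma degLE_bubblePoly (m : ℕ) : degLE (m : ℤ) (bubblePoly m) := by
  intro d hd
  classical
  rw [bubblePoly_eq, support_monomial] at hd
  simp only [one_ne_zero, if_false, Finset.mem_singleton] at hd
  subst hd
  rw [Finsupp.sum_fintype _ _ (fun _ => rfl)]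
  simp

/-- Coefficients with a zero exponent vanish for a polynomial vanishing on a hyperplane. -/
lemma coeff_eq_zero_of_vanish {m : ℕ} (p : MvPolynomial (Fin m) ℝ) (i : Fin m)
    (h : ∀ x : Vec m, x i = 0 → eval x p = 0) :
    ∀ d : Fin m →₀ ℕ, d i = 0 → coeff d p = 0 := by
  classical
  set f : Fin m → MvPolynomial (Fin m) ℝ := Function.update X i 0 with hf
  have h1 : ∀ x : Vec m, eval x (eval₂ C f p) = eval (Function.update x i 0) p := by
    intro x
    rw [eval_eval₂]
    have hC : (eval x).comp (C : ℝ →+* MvPolynomial (Fin m) ℝ) = RingHom.id ℝ := by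
      ext r; simp
    have hg : (fun s => eval x (f s)) = Function.update x i 0 := by
      funext sIdx
      by_cases hsi : sIdx = i
      · subst hsi; simp [hf]
      · simp [hf, Function.update_of_ne hsi]
    rw [hC, hg, eval₂_id]
  have h2 : eval₂ C f p = 0 := by
    apply MvPolynomial.funext
    intro x
    rw [h1 x, map_zero]
    exact h _ (Function.update_self i 0 x)
  have h3 : eval₂ C f p =
      ∑ u ∈ p.support, if u i = 0 then monomial u (coeff u p) else 0 := by
    conv_lhs => rw [as_sum p]
    rw [eval₂_sum]
    refine Finset.sum_congr rfl fun u _ => ?_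
    rw [eval₂_monomial]
    by_cases hui : u i = 0
    · rw [if_pos hui]
      have hprod : (u.prod fun j e => f j ^ e) = u.prod fun j e => X j ^ e := by
        apply Finsupp.prod_congr
        intro j hj
        have hji : j ≠ i := by
          intro hji; subst hji; exact (Finsupp.mem_support_iff.mp hj) hui
        rw [hf, Function.update_of_ne hji]
      rw [hprod, ← monomial_eq]
    · rw [if_neg hui]
      have hi : i ∈ u.support := Finsupp.mem_support_iff.mpr hui
      have hz : (u.prod fun j e => f j ^ e) = 0 := by
        apply Finset.prod_eq_zero hi
        show f i ^ u i = 0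
        rw [hf, Function.update_self]
        exact zero_pow hui
      rw [hz, mul_zero]
  intro d hdi
  by_cases hds : d ∈ p.support
  · have hc : coeff d (∑ u ∈ p.support, if u i = 0 then monomial u (coeff u p) else 0) = 0 := by
      rw [← h3, h2, coeff_zero]
    rw [coeff_sum] at hc
    rw [Finset.sum_eq_single_of_mem d hds] at hc
    · rw [if_pos hdi, coeff_monomial, if_pos rfl] at hc
      exact hc
    · intro u _ hud
      by_cases hui : u i = 0
      · rw [if_pos hui, coeff_monomial, if_neg hud]
      · rw [if_neg hui, coeff_zero]
  · exact notMem_support_iff.mp hds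

/-- Dividing out the bubble polynomial. -/
def shiftPoly {m : ℕ} (p : MvPolynomial (Fin m) ℝ) : MvPolynomial (Fin m) ℝ :=
  ∑ d ∈ p.support, monomial (d - oneF m) (coeff d p)

lemma oneF_le {m : ℕ} {p : MvPolynomial (Fin m) ℝ}
    (hc : ∀ d : Fin m →₀ ℕ, (∃ i, d i = 0) → coeff d p = 0)
    {d : Fin m →₀ ℕ} (hd : d ∈ p.support) : oneF m ≤ d := by
  intro j
  rw [oneF_apply]
  by_contra hj
  have hdj : d j = 0 := by omega
  exact (MvPolynomial.mem_support_iff.mp hd) (hc d ⟨j, hdj⟩)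

lemma bubblePoly_mul_shiftPoly {m : ℕ} {p : MvPolynomial (Fin m) ℝ}
    (hc : ∀ d : Fin m →₀ ℕ, (∃ i, d i = 0) → coeff d p = 0) :
    bubblePoly m * shiftPoly p = p := by
  rw [bubblePoly_eq, shiftPoly, Finset.mul_sum]
  conv_rhs => rw [as_sum p]
  refine Finset.sum_congr rfl fun d hd => ?_
  rw [monomial_mul, one_mul, add_tsub_cancel_of_le (oneF_le hc hd)]

lemma degLE_shiftPoly {m : ℕ} {s : ℤ} {p : MvPolynomial (Fin m) ℝ}
    (hp : degLE s p)
    (hc : ∀ d : Fin m →₀ ℕ, (∃ i, d i = 0) → coeff d p = 0) :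
    degLE (s - m) (shiftPoly p) := by
  intro d hd
  classical
  have hd' := MvPolynomial.support_sum hd
  rw [Finset.mem_biUnion] at hd'
  obtain ⟨u, hu, hdu⟩ := hd'
  have hdu' : d = u - oneF m := by
    have := support_monomial_subset hdu
    simpa using this
  subst hdu'
  have hone := oneF_le hc hu
  have hus := hp u hu
  rw [Finsupp.sum_fintype _ _ (fun _ => rfl)] at hus ⊢
  have heq : ∀ j, (u - oneF m) j = u j - 1 := by
    intro j; rw [Finsupp.tsub_apply, oneF_apply]
  have hcast : ((∑ j, (u - oneF m) j : ℕ) : ℤ) = (∑ j, (u j : ℤ)) - m := by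
    rw [Nat.cast_sum]
    have hterm : ∀ j ∈ (Finset.univ : Finset (Fin m)),
        (((u - oneF m) j : ℕ) : ℤ) = (u j : ℤ) - 1 := by
      intro j _
      rw [heq j]
      have h1j := hone j
      rw [oneF_apply] at h1j
      rw [Nat.cast_sub h1j]
      norm_num
    rw [Finset.sum_congr rfl hterm, Finset.sum_sub_distrib]
    simp
  rw [hcast]
  rw [Nat.cast_sum] at hus
  omega

end Stmt15Aux

theorem stmt15 (n k s : ℕ) (hk : k ≤ n + 1) :
    {α ∈ PL (n + 1) k (s : ℤ) | zeroOnGammaAmb (n + 1) k α} =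
      bubbleSmulAmb (n + 1) k '' PL (n + 1) k ((s : ℤ) - n - 1) := by
  classical
  open Stmt15Aux in
  ext α
  simp only [Set.mem_setOf_eq, Set.mem_image]
  constructor
  · rintro ⟨hαP, hαΓ⟩
    choose P hPdeg hPval using hαP
    have hPuniq : ∀ (v : Fin k → Vec (n + 1)) (q : MvPolynomial (Fin (n + 1)) ℝ),
        (∀ x, α x v = MvPolynomial.eval x q) → P v = q := by
      intro v q h
      apply MvPolynomial.funext
      intro x
      rw [← hPval v x, ← h x]
    have hPc : ∀ v (d : Fin (n + 1) →₀ ℕ), (∃ i, d i = 0) →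
        MvPolynomial.coeff d (P v) = 0 := by
      rintro v d ⟨i, hdi⟩
      refine coeff_eq_zero_of_vanish (P v) i (fun x hx => ?_) d hdi
      rw [← hPval v x]
      rw [hαΓ x ⟨i, hx⟩]
      rfl
    set Q : (Fin k → Vec (n + 1)) → MvPolynomial (Fin (n + 1)) ℝ :=
      fun v => shiftPoly (P v) with hQdef
    have hQ : ∀ v, bubblePoly (n + 1) * Q v = P v :=
      fun v => bubblePoly_mul_shiftPoly (hPc v)
    have cancel : ∀ q₁ q₂ : MvPolynomial (Fin (n + 1)) ℝ,
        bubblePoly (n + 1) * q₁ = bubblePoly (n + 1) * q₂ → q₁ = q₂ :=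
      fun q₁ q₂ h => mul_left_cancel₀ (bubblePoly_ne_zero (n + 1)) h
    have hQadd : ∀ (v : Fin k → Vec (n + 1)) (j : Fin k) (y z : Vec (n + 1)),
        Q (Function.update v j (y + z)) = Q (Function.update v j y) + Q (Function.update v j z) := by
      intro v j y z
      apply cancel
      rw [mul_add, hQ, hQ, hQ]
      apply hPuniq
      intro x
      rw [map_add, ← hPval, ← hPval]
      exact (α x).map_update_add v j y z
    have hQsmul : ∀ (v : Fin k → Vec (n + 1)) (j : Fin k) (c : ℝ) (y : Vec (n + 1)),
        Q (Function.update v j (c • y)) = c • Q (Function.update v j y) := by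
      intro v j c y
      apply cancel
      rw [mul_smul_comm, hQ, hQ]
      apply hPuniq
      intro x
      rw [MvPolynomial.smul_eval, ← hPval]
      exact (α x).map_update_smul v j c y
    have hQzero : ∀ (v : Fin k → Vec (n + 1)) (i j : Fin k), v i = v j → i ≠ j → Q v = 0 := by
      intro v i j hv hij
      apply cancel
      rw [hQ, mul_zero]
      apply hPuniq
      intro x
      rw [map_zero]
      exact (α x).map_eq_zero_of_eq v hv hij
    set β : Form (n + 1) k := fun x =>
      { toFun := fun v => MvPolynomial.eval x (Q v)
        map_update_add' := by
          intro dec v j y z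
          have hdec : dec = instDecidableEqFin k := Subsingleton.elim _ _
          subst hdec
          show MvPolynomial.eval x (Q (Function.update v j (y + z))) =
            MvPolynomial.eval x (Q (Function.update v j y)) +
              MvPolynomial.eval x (Q (Function.update v j z))
          rw [hQadd v j y z, map_add]
        map_update_smul' := by
          intro dec v j c y
          have hdec : dec = instDecidableEqFin k := Subsingleton.elim _ _
          subst hdec
          show MvPolynomial.eval x (Q (Function.update v j (c • y))) =
            c • MvPolynomial.eval x (Q (Function.update v j y))
          rw [hQsmul v j c y, MvPolynomial.smul_eval]
          rfl
        map_eq_zero_of_eq' := by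
          intro v i j hv hij
          show MvPolynomial.eval x (Q v) = 0
          rw [hQzero v i j hv hij, map_zero] } with hβdef
    refine ⟨β, ?_, ?_⟩
    · intro v
      refine ⟨Q v, ?_, fun x => rfl⟩
      have hdeg := degLE_shiftPoly (hPdeg v) (hPc v)
      intro d hd
      have := hdeg d hd
      push_cast at this ⊢
      omega
    · funext x
      ext v
      show bubble (n + 1) x • (MvPolynomial.eval x (Q v)) = α x v
      rw [← eval_bubblePoly x, smul_eq_mul, ← MvPolynomial.eval_mul, hQ, hPval]
  · rintro ⟨β, hβ, rfl⟩
    constructor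
    · intro v
      obtain ⟨q, hqdeg, hqval⟩ := hβ v
      refine ⟨bubblePoly (n + 1) * q, ?_, ?_⟩
      · have := degLE_mul (degLE_bubblePoly (n + 1)) hqdeg
        intro d hd
        have h2 := this d hd
        push_cast at h2 ⊢
        omega
      · intro x
        rw [MvPolynomial.eval_mul, eval_bubblePoly, ← hqval]
        rfl
    · rintro u ⟨i, hui⟩
      have hb : bubble (n + 1) u = 0 :=
        Finset.prod_eq_zero (Finset.mem_univ i) hui
      show bubble (n + 1) u • β u = 0
      rw [hb, zero_smul]

end
end

section
/- Let n ≥ 1, 0 ≤ k ≤ n, and s ≥ 0. Every differential form α ∈ P̊̊_s^-Λ^k(S^n) has an extension to a form α̂ ∈ P̊̊_s^-Λ^k(ℝ^{n+1}); that is, there exists α̂ ∈ P_s^-Λ^k(ℝ^{n+1}) whose alternating tensor α̂_u on T_uℝ^{n+1} is zero for all u ∈ Γ and whose pullback along the inclusion S^n ↪ ℝ^{n+1} equals α. -/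
open scoped BigOperators
open MeasureTheory

noncomputable section

-- 1
lemma auxAltSumApply {m k : ℕ} {α : Type*} [DecidableEq α] (s : Finset α)
    (f : α → (Vec m) [⋀^Fin k]→ₗ[ℝ] ℝ)
    (v : Fin k → Vec m) : (∑ j ∈ s, f j) v = ∑ j ∈ s, f j v := by
  induction s using Finset.induction with
  | empty => simp
  | insert h ih => simp_all [Finset.sum_insert]

-- 2
lemma auxHomogEvalSmul {m d : ℕ} {p : MvPolynomial (Fin m) ℝ} (hp : p.IsHomogeneous d)
    (c : ℝ) (x : Fin m → ℝ) :
    MvPolynomial.eval (c • x) p = c ^ d * MvPolynomial.eval x p := by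
  rw [MvPolynomial.eval_eq, MvPolynomial.eval_eq, Finset.mul_sum]
  refine Finset.sum_congr rfl fun t ht => ?_
  have hdeg : t.degree = d := by
    by_contra h
    exact (MvPolynomial.mem_support_iff.mp ht) (hp.coeff_eq_zero h)
  have : ∏ i ∈ t.support, ((c • x) i) ^ t i
      = c ^ d * ∏ i ∈ t.support, (x i) ^ t i := by
    have : ∏ i ∈ t.support, ((c • x) i) ^ t i
        = ∏ i ∈ t.support, (c ^ t i * (x i) ^ t i) := by
      refine Finset.prod_congr rfl fun i _ => ?_
      simp [mul_pow]
    rw [this, Finset.prod_mul_distrib, Finset.prod_pow_eq_pow_sum]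
    rw [show (∑ i ∈ t.support, t i) = t.degree from rfl, hdeg]
  rw [this]; ring

-- 3
def auxW (m s e : ℕ) : MvPolynomial (Fin m) ℝ :=
  (∑ i : Fin m, MvPolynomial.X i ^ 2) ^ ((s - e) / 2)

def auxC (m s : ℕ) (j : ℕ) (x : Vec m) : ℝ :=
  ∑ e ∈ Finset.range (s + 1),
    (Lagrange.basis (Finset.range (s + 1)) (fun t => (t : ℝ)) j).coeff e
      * MvPolynomial.eval x (auxW m s e)

lemma auxWeval (m s e : ℕ) (x : Vec m) :
    MvPolynomial.eval x (auxW m s e) = (∑ i, x i ^ 2) ^ ((s - e) / 2) := by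
  simp [auxW]

-- 5
lemma auxLagrange (s d : ℕ) (hd : d ≤ s) :
    (Polynomial.X ^ d : Polynomial ℝ) =
      ∑ j ∈ Finset.range (s + 1),
        Polynomial.C ((j : ℝ) ^ d) * Lagrange.basis (Finset.range (s + 1)) (fun t => (t : ℝ)) j := by
  have hinj : Set.InjOn (fun t : ℕ => (t : ℝ)) (Finset.range (s + 1)) :=
    fun a _ b _ hab => Nat.cast_injective hab
  have hdeg : (Polynomial.X ^ d : Polynomial ℝ).degree < (Finset.range (s + 1)).card := by
    rw [Polynomial.degree_X_pow, Finset.card_range]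
    exact_mod_cast Nat.lt_succ_of_le hd
  have h := Lagrange.eq_interpolate hinj hdeg
  rw [Lagrange.interpolate_apply] at h
  rw [h]
  exact Finset.sum_congr rfl fun j _ => by simp

-- 6
lemma auxKey (m s d : ℕ) (hd : d ≤ s) (x : Vec m) :
    ∑ j ∈ Finset.range (s + 1), auxC m s j x * (j : ℝ) ^ d
      = MvPolynomial.eval x (auxW m s d) := by
  have hcoeff : ∀ e, (∑ j ∈ Finset.range (s + 1),
      (j : ℝ) ^ d * (Lagrange.basis (Finset.range (s + 1)) (fun t => (t : ℝ)) j).coeff e)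
      = if e = d then (1 : ℝ) else 0 := by
    intro e
    have h := congrArg (fun q => Polynomial.coeff q e) (auxLagrange s d hd)
    simp only [Polynomial.finset_sum_coeff, Polynomial.coeff_C_mul,
      Polynomial.coeff_X_pow] at h
    rw [← h]
  unfold auxC
  simp_rw [Finset.sum_mul]
  rw [Finset.sum_comm]
  have : ∀ e ∈ Finset.range (s + 1),
      (∑ j ∈ Finset.range (s + 1),
        (Lagrange.basis (Finset.range (s + 1)) (fun t => (t : ℝ)) j).coeff e
          * MvPolynomial.eval x (auxW m s e) * (j : ℝ) ^ d)
      = (if e = d then (1:ℝ) else 0) * MvPolynomial.eval x (auxW m s e) := by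
    intro e _
    rw [← hcoeff e, Finset.sum_mul]
    exact Finset.sum_congr rfl fun j _ => by ring
  rw [Finset.sum_congr rfl this]
  rw [Finset.sum_congr rfl (fun e _ => ite_mul (α := ℝ) _ _ _ _)]
  simp only [one_mul, zero_mul]
  rw [Finset.sum_ite_eq' (Finset.range (s+1)) d
    (fun e => MvPolynomial.eval x (auxW m s e))]
  simp [Finset.mem_range, Nat.lt_succ_of_le hd]

-- 7
lemma auxSumHomog (m t : ℕ) (p : MvPolynomial (Fin m) ℝ)
    (hp : ∀ d ∈ p.support, (d.sum fun _ e => e) < t) :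
    ∑ e ∈ Finset.range t, MvPolynomial.homogeneousComponent e p = p := by
  apply MvPolynomial.ext
  intro d
  rw [MvPolynomial.coeff_sum]
  simp_rw [MvPolynomial.coeff_homogeneousComponent]
  by_cases hd : d ∈ p.support
  · have hlt : d.degree < t := hp d hd
    rw [Finset.sum_ite_eq (Finset.range t) d.degree (fun _ => MvPolynomial.coeff d p)]
    simp [Finset.mem_range, hlt]
  · have h0 : MvPolynomial.coeff d p = 0 := by
      simpa [MvPolynomial.mem_support_iff] using hd
    simp [h0]

-- degLE consequences
lemma auxDegLT (m s : ℕ) (p : MvPolynomial (Fin m) ℝ) (hp : degLE ((s : ℤ) - 1) p) :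
    ∀ d ∈ p.support, (d.sum fun _ e => e) < s := by
  intro d hd
  have := hp d hd
  omega

lemma auxDegLT' (m s : ℕ) (p : MvPolynomial (Fin m) ℝ) (hp : degLE (s : ℤ) p) :
    ∀ d ∈ p.support, (d.sum fun _ e => e) < s + 1 := by
  intro d hd
  have := hp d hd
  omega

-- 8a
lemma auxRepA (m s : ℕ) (p : MvPolynomial (Fin m) ℝ) (hp : degLE (s : ℤ) p) (x : Vec m) :
    ∑ j ∈ Finset.range (s + 1), auxC m s j x * MvPolynomial.eval ((j : ℝ) • x) p
      = ∑ e ∈ Finset.range (s + 1),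
          MvPolynomial.eval x (auxW m s e)
            * MvPolynomial.eval x (MvPolynomial.homogeneousComponent e p) := by
  have hexp : ∀ c : ℝ, MvPolynomial.eval (c • x) p
      = ∑ e ∈ Finset.range (s + 1),
          c ^ e * MvPolynomial.eval x (MvPolynomial.homogeneousComponent e p) := by
    intro c
    conv_lhs => rw [← auxSumHomog m (s + 1) p (auxDegLT' m s p hp)]
    rw [map_sum]
    exact Finset.sum_congr rfl fun e _ =>
      auxHomogEvalSmul (MvPolynomial.homogeneousComponent_isHomogeneous e p) c x
  simp_rw [hexp, Finset.mul_sum]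
  rw [Finset.sum_comm]
  refine Finset.sum_congr rfl fun e he => ?_
  have : ∀ j ∈ Finset.range (s+1),
      auxC m s j x * ((j:ℝ) ^ e * MvPolynomial.eval x (MvPolynomial.homogeneousComponent e p))
      = (auxC m s j x * (j:ℝ) ^ e) * MvPolynomial.eval x (MvPolynomial.homogeneousComponent e p) :=
    fun j _ => by ring
  rw [Finset.sum_congr rfl this, ← Finset.sum_mul,
    auxKey m s e (Nat.lt_succ_iff.mp (Finset.mem_range.mp he)) x]

-- 8b
lemma auxRepB (m s : ℕ) (p : MvPolynomial (Fin m) ℝ) (hp : degLE ((s : ℤ) - 1) p) (x : Vec m) :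
    ∑ j ∈ Finset.range (s + 1), auxC m s j x * ((j : ℝ) * MvPolynomial.eval ((j : ℝ) • x) p)
      = ∑ e ∈ Finset.range s,
          MvPolynomial.eval x (auxW m s (e + 1))
            * MvPolynomial.eval x (MvPolynomial.homogeneousComponent e p) := by
  have hexp : ∀ c : ℝ, c * MvPolynomial.eval (c • x) p
      = ∑ e ∈ Finset.range s,
          c ^ (e + 1) * MvPolynomial.eval x (MvPolynomial.homogeneousComponent e p) := by
    intro c
    conv_lhs => rw [← auxSumHomog m s p (auxDegLT m s p hp)]
    rw [map_sum, Finset.mul_sum]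
    refine Finset.sum_congr rfl fun e _ => ?_
    rw [auxHomogEvalSmul (MvPolynomial.homogeneousComponent_isHomogeneous e p) c x]
    ring
  simp_rw [hexp, Finset.mul_sum]
  rw [Finset.sum_comm]
  refine Finset.sum_congr rfl fun e he => ?_
  have : ∀ j ∈ Finset.range (s+1),
      auxC m s j x * ((j:ℝ) ^ (e+1) * MvPolynomial.eval x (MvPolynomial.homogeneousComponent e p))
      = (auxC m s j x * (j:ℝ) ^ (e+1)) * MvPolynomial.eval x (MvPolynomial.homogeneousComponent e p) :=
    fun j _ => by ring
  rw [Finset.sum_congr rfl this, ← Finset.sum_mul,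
    auxKey m s (e + 1) (Finset.mem_range.mp he) x]

-- degree of auxW
lemma auxWdeg (m s e : ℕ) : (auxW m s e).totalDegree ≤ 2 * ((s - e) / 2) := by
  unfold auxW
  refine le_trans (MvPolynomial.totalDegree_pow _ _) ?_
  have h2 : (∑ i : Fin m, MvPolynomial.X i ^ 2 : MvPolynomial (Fin m) ℝ).totalDegree ≤ 2 := by
    refine le_trans (MvPolynomial.totalDegree_finset_sum _ _) ?_
    apply Finset.sup_le
    intro i _
    rw [MvPolynomial.totalDegree_X_pow]
  calc ((s-e)/2) * (∑ i : Fin m, MvPolynomial.X i ^ 2 : MvPolynomial (Fin m) ℝ).totalDegree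
      ≤ ((s-e)/2) * 2 := Nat.mul_le_mul_left _ h2
    _ = 2 * ((s-e)/2) := by ring

-- 10: degree bound for the corrected polynomial
lemma auxQdeg (m s : ℕ) (p : MvPolynomial (Fin m) ℝ) :
    degLE ((s : ℤ) - 1)
      (∑ e ∈ Finset.range s, auxW m s (e + 1) * MvPolynomial.homogeneousComponent e p) := by
  rcases Nat.eq_zero_or_pos s with hs | hs
  · subst hs
    intro d hd
    simp at hd
  · intro d hd
    have hle : (d.sum fun _ e => e) ≤ (∑ e ∈ Finset.range s,
        auxW m s (e + 1) * MvPolynomial.homogeneousComponent e p).totalDegree :=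
      MvPolynomial.le_totalDegree hd
    have htot : (∑ e ∈ Finset.range s,
        auxW m s (e + 1) * MvPolynomial.homogeneousComponent e p).totalDegree ≤ s - 1 := by
      refine le_trans (MvPolynomial.totalDegree_finset_sum _ _) ?_
      apply Finset.sup_le
      intro e he
      have he' := Finset.mem_range.mp he
      refine le_trans (MvPolynomial.totalDegree_mul _ _) ?_
      have h1 := auxWdeg m s (e + 1)
      have h2 := (MvPolynomial.homogeneousComponent_isHomogeneous e p).totalDegree_le
      omega
    omega

lemma auxNegOnePow (a b : ℕ) (h : a % 2 = b % 2) : ((-1 : ℝ)) ^ a = (-1) ^ b := by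
  conv_lhs => rw [← Nat.div_add_mod a 2]
  conv_rhs => rw [← Nat.div_add_mod b 2]
  rw [pow_add, pow_add, pow_mul, pow_mul, h]
  norm_num


lemma auxDotLin (m : ℕ) (y w : Vec m) : dotLin m y w = ∑ t, y t * w t := by
  unfold dotLin
  rw [LinearMap.sum_apply]
  exact Finset.sum_congr rfl fun t _ => by simp

lemma auxProjSph (m : ℕ) (y w : Vec m) :
    projSph m y w = w - (∑ t, y t * w t) • y := by
  unfold projSph
  rw [LinearMap.sub_apply, LinearMap.id_apply, LinearMap.smulRight_apply, auxDotLin]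

-- cons-slot-0 linearity helpers
lemma auxConsSmul {m k : ℕ} (f : (Vec m) [⋀^Fin (k+1)]→ₗ[ℝ] ℝ) (x : Vec m) (c : ℝ)
    (v : Fin k → Vec m) : f (Fin.cons (c • x) v) = c * f (Fin.cons x v) := by
  have h : f.curryLeft (c • x) = c • f.curryLeft x := map_smul _ _ _
  calc f (Fin.cons (c • x) v) = (f.curryLeft (c • x)) v := rfl
    _ = (c • f.curryLeft x) v := by rw [h]
    _ = c * f (Fin.cons x v) := rfl

lemma auxConsExpand {m k : ℕ} (f : (Vec m) [⋀^Fin (k+1)]→ₗ[ℝ] ℝ) (x : Vec m)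
    (v : Fin k → Vec m) :
    f (Fin.cons x v) = ∑ i, x i * f (Fin.cons (Pi.single i 1) v) := by
  have hx : x = ∑ i, x i • (Pi.single i 1 : Vec m) := by ext j; simp [Pi.single_apply]
  have h : f.curryLeft x = ∑ i, x i • f.curryLeft (Pi.single i 1) := by
    conv_lhs => rw [hx]
    rw [map_sum]
    exact Finset.sum_congr rfl fun i _ => map_smul _ _ _
  calc f (Fin.cons x v) = (f.curryLeft x) v := rfl
    _ = (∑ i, x i • f.curryLeft (Pi.single i 1)) v := by rw [h]
    _ = ∑ i, x i * f (Fin.cons (Pi.single i 1) v) := by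
        rw [auxAltSumApply]
        exact Finset.sum_congr rfl fun i _ => rfl

-- full vanishing of an iU-form at points of the sphere with a zero coordinate
lemma auxFullVanish (m k : ℕ) (β : Form m (k+1)) (α : FormOn m (sphereSet m) k)
    (hres : resSph m k (iU β) = α) (hzg : zeroOnGammaSph m k α)
    (y : Vec m) (hy : y ∈ sphereSet m) (i : Fin m) (hyi : y i = 0)
    (v : Fin k → Vec m) : iU β y v = 0 := by
  classical
  have hA : ∀ (w : Fin k → Vec m) (l : Fin k), w l = y → iU β y w = 0 := by
    intro w l hl
    show β y (Fin.cons y w) = 0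
    exact (β y).map_eq_zero_of_eq (Fin.cons y w) (i := 0) (j := l.succ)
      (by simp [hl]) (Fin.succ_ne_zero l).symm
  set c : Fin k → ℝ := fun l => ∑ t, y t * v l t with hc
  set pv : Fin k → Vec m := fun l => projSph m y (v l) with hpv
  have hsum : ∀ t (w : Vec m), y t * (w t - (∑ r, y r * w r) * y t)
      = y t * w t - (∑ r, y r * w r) * (y t * y t) := fun t w => by ring
  have htan : ∀ (w : Vec m), ∑ t, y t * (projSph m y w) t = 0 := by
    intro w
    have : ∀ t, (projSph m y w) t = w t - (∑ r, y r * w r) * y t := by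
      intro t
      rw [auxProjSph]
      simp [mul_comm]
    simp_rw [this, hsum]
    rw [Finset.sum_sub_distrib, ← Finset.mul_sum]
    have hy2 : ∑ t, y t * y t = 1 := by
      have := hy
      simpa [sphereSet, pow_two] using this
    rw [hy2]
    ring
  have hidem : ∀ l, projSph m y (pv l) = pv l := by
    intro l
    rw [auxProjSph, htan]
    simp
  have hvdec : v = pv + fun l => c l • y := by
    funext l
    have : pv l = v l - c l • y := by
      show projSph m y (v l) = v l - c l • y
      rw [auxProjSph]
    simp [this]
  have hexpand : iU β y v = ∑ S : Finset (Fin k),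
      iU β y (S.piecewise pv fun l => c l • y) := by
    conv_lhs => rw [hvdec]
    exact (iU β y).toMultilinearMap.map_add_univ pv (fun l => c l • y)
  have hterm : ∀ S : Finset (Fin k), S ≠ Finset.univ →
      iU β y (S.piecewise pv fun l => c l • y) = 0 := by
    intro S hS
    have : ∃ l₀, l₀ ∉ S := by
      by_contra h
      push_neg at h
      exact hS (Finset.eq_univ_iff_forall.mpr h)
    obtain ⟨l₀, hl₀⟩ := this
    set g : Fin k → Vec m := S.piecewise pv fun l => c l • y with hg
    have hgl₀ : g l₀ = c l₀ • y := Finset.piecewise_eq_of_notMem _ _ _ hl₀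
    have h1 : g = Function.update g l₀ (c l₀ • y) := by
      rw [← hgl₀, Function.update_eq_self]
    have h2 : iU β y (Function.update g l₀ (c l₀ • y))
        = c l₀ • iU β y (Function.update g l₀ y) :=
      (iU β y).map_update_smul g l₀ (c l₀) y
    have h3 : iU β y (Function.update g l₀ y) = 0 :=
      hA (Function.update g l₀ y) l₀ (Function.update_self l₀ y g)
    rw [h1, h2, h3, smul_zero]
  have hpvterm : iU β y pv = 0 := by
    have hαpv : α ⟨y, hy⟩ pv = 0 :=
      hzg ⟨y, hy⟩ ⟨i, hyi⟩ pv (fun l => htan (v l))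
    have : α ⟨y, hy⟩ pv = iU β y pv := by
      rw [← hres]
      show (iU β y).compLinearMap (projSph m y) pv = iU β y pv
      rw [AlternatingMap.compLinearMap_apply]
      congr 1
      funext l
      exact hidem l
    rw [← this, hαpv]
  rw [hexpand]
  rw [Finset.sum_eq_single Finset.univ (fun S _ hS => hterm S hS) (by simp)]
  rw [Finset.piecewise_univ]
  exact hpvterm

theorem stmt18 (n k s : ℕ) (hn : 1 ≤ n) (hk : k ≤ n) :
    ∀ α ∈ PLmsph (n + 1) k (s : ℤ), zeroOnGammaSph (n + 1) k α →
      ∃ αext ∈ PLm (n + 1) k (s : ℤ),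
        zeroOnGammaAmb (n + 1) k αext ∧ resSph (n + 1) k αext = α := by
  classical
  intro α hα hzg
  obtain ⟨αh, ⟨βh, hβh, rfl⟩, hres⟩ := hα
  have hβh' : ∀ v : Fin (k+1) → Vec (n+1), ∃ p : MvPolynomial (Fin (n+1)) ℝ,
      degLE ((s : ℤ) - 1) p ∧ ∀ x, βh x v = MvPolynomial.eval x p := hβh
  choose pfun hdeg heval using hβh'
  -- the coefficient polynomials of iU βh
  set A : (Fin k → Vec (n+1)) → MvPolynomial (Fin (n+1)) ℝ :=
    fun v => ∑ i : Fin (n+1), MvPolynomial.X i * pfun (Fin.cons (Pi.single i 1) v) with hA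
  have hAeval : ∀ (v : Fin k → Vec (n+1)) (x : Vec (n+1)),
      MvPolynomial.eval x (A v) = βh x (Fin.cons x v) := by
    intro v x
    rw [hA]
    rw [map_sum]
    have : ∀ i : Fin (n+1), MvPolynomial.eval x
          (MvPolynomial.X i * pfun (Fin.cons (Pi.single i 1) v))
        = x i * βh x (Fin.cons (Pi.single i 1) v) := by
      intro i
      rw [map_mul, MvPolynomial.eval_X, ← heval (Fin.cons (Pi.single i 1) v) x]
    rw [Finset.sum_congr rfl fun i _ => this i]
    exact (auxConsExpand (βh x) x v).symm
  have hAdeg : ∀ v : Fin k → Vec (n+1), degLE (s : ℤ) (A v) := by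
    intro v d hd
    have h1 : (d.sum fun _ e => e) ≤ (A v).totalDegree := MvPolynomial.le_totalDegree hd
    have h2 : (A v).totalDegree ≤ s := by
      rw [hA]
      refine le_trans (MvPolynomial.totalDegree_finset_sum _ _) ?_
      apply Finset.sup_le
      intro i _
      set p := pfun (Fin.cons (Pi.single i 1) v) with hp
      by_cases hp0 : p = 0
      · rw [hp0, mul_zero]
        simp
      · have hsupp : p.support.Nonempty := by
          rw [Finset.nonempty_iff_ne_empty]
          intro h
          exact hp0 (MvPolynomial.support_eq_empty.mp h)
        obtain ⟨d₀, hd₀mem, hd₀⟩ := Finset.exists_mem_eq_sup p.support hsupp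
          (fun t => t.sum fun _ e => e)
        have hb := hdeg (Fin.cons (Pi.single i 1) v) d₀ hd₀mem
        have htot : p.totalDegree = d₀.sum fun _ e => e := hd₀
        have hps : p.totalDegree + 1 ≤ s := by omega
        refine le_trans (MvPolynomial.totalDegree_mul _ _) ?_
        have hX : (MvPolynomial.X i : MvPolynomial (Fin (n+1)) ℝ).totalDegree = 1 :=
          MvPolynomial.totalDegree_X i
        omega
    omega
  set βext : Form (n+1) (k+1) :=
    fun x => ∑ j ∈ Finset.range (s + 1), (auxC (n+1) s j x * (j : ℝ)) • βh ((j : ℝ) • x)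
    with hβext
  have hβextApply : ∀ (x : Vec (n+1)) (w : Fin (k+1) → Vec (n+1)),
      βext x w = ∑ j ∈ Finset.range (s + 1),
        (auxC (n+1) s j x * (j : ℝ)) * βh ((j : ℝ) • x) w := by
    intro x w
    rw [hβext]
    rw [auxAltSumApply]
    exact Finset.sum_congr rfl fun j _ => rfl
  have hMain : ∀ (x : Vec (n+1)) (v : Fin k → Vec (n+1)),
      iU βext x v = ∑ e ∈ Finset.range (s + 1),
        MvPolynomial.eval x (auxW (n+1) s e)
          * MvPolynomial.eval x (MvPolynomial.homogeneousComponent e (A v)) := by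
    intro x v
    have h0 : iU βext x v = βext x (Fin.cons x v) := rfl
    rw [h0, hβextApply]
    have h1 : ∀ j ∈ Finset.range (s + 1),
        (auxC (n+1) s j x * (j : ℝ)) * βh ((j : ℝ) • x) (Fin.cons x v)
        = auxC (n+1) s j x * MvPolynomial.eval ((j : ℝ) • x) (A v) := by
      intro j _
      rw [hAeval v ((j : ℝ) • x), auxConsSmul]
      ring
    rw [Finset.sum_congr rfl h1]
    exact auxRepA (n+1) s (A v) (hAdeg v) x
  refine ⟨iU βext, ⟨βext, ?_, rfl⟩, ?_, ?_⟩
  · -- βext ∈ PL (n+1) (k+1) ((s:ℤ) - 1)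
    intro w
    refine ⟨∑ e ∈ Finset.range s,
      auxW (n+1) s (e + 1) * MvPolynomial.homogeneousComponent e (pfun w),
      auxQdeg (n+1) s (pfun w), ?_⟩
    intro x
    rw [hβextApply]
    have h1 : ∀ j ∈ Finset.range (s + 1),
        (auxC (n+1) s j x * (j : ℝ)) * βh ((j : ℝ) • x) w
        = auxC (n+1) s j x * ((j : ℝ) * MvPolynomial.eval ((j : ℝ) • x) (pfun w)) := by
      intro j _
      rw [heval w ((j : ℝ) • x)]
      ring
    rw [Finset.sum_congr rfl h1, auxRepB (n+1) s (pfun w) (hdeg w) x, map_sum]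
    exact Finset.sum_congr rfl fun e _ => (map_mul _ _ _).symm
  · -- zeroOnGammaAmb
    intro u hu
    obtain ⟨i, hui⟩ := hu
    apply AlternatingMap.ext
    intro v
    rw [AlternatingMap.zero_apply]
    by_cases hu0 : u = 0
    · subst hu0
      show βext 0 (Fin.cons 0 v) = 0
      exact (βext 0).map_coord_zero 0 (by simp)
    · have hρ : 0 < ∑ t, u t ^ 2 := by
        obtain ⟨t₀, ht₀⟩ := Function.ne_iff.mp hu0
        refine Finset.sum_pos' (fun t _ => sq_nonneg (u t)) ⟨t₀, Finset.mem_univ t₀, ?_⟩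
        exact pow_two_pos_of_ne_zero ht₀
      set r : ℝ := Real.sqrt (∑ t, u t ^ 2) with hrdef
      have hr : 0 < r := Real.sqrt_pos.mpr hρ
      have hr2 : r ^ 2 = ∑ t, u t ^ 2 := Real.sq_sqrt hρ.le
      set y : Vec (n+1) := r⁻¹ • u with hydef
      have hyt : ∀ t, y t = r⁻¹ * u t := fun t => rfl
      have hy : y ∈ sphereSet (n+1) := by
        show (∑ t, y t ^ 2) = 1
        simp_rw [hyt, mul_pow, ← Finset.mul_sum]
        rw [← hr2]
        field_simp
      have hyi : y i = 0 := by rw [hyt, hui, mul_zero]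
      have hy' : ((-1 : ℝ) • y) ∈ sphereSet (n+1) := by
        show (∑ t, ((-1 : ℝ) • y) t ^ 2) = 1
        have : ∀ t, ((-1 : ℝ) • y) t ^ 2 = y t ^ 2 := by
          intro t
          show ((-1 : ℝ) * y t) ^ 2 = y t ^ 2
          ring
        simp_rw [this]
        exact hy
      have hyi' : ((-1 : ℝ) • y) i = 0 := by
        show (-1 : ℝ) * y i = 0
        rw [hyi, mul_zero]
      have hu : u = r • y := by
        funext t
        show u t = r * (r⁻¹ * u t)
        field_simp
      have hvanY : ∀ w, MvPolynomial.eval y (A w) = 0 := by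
        intro w
        rw [hAeval]
        exact auxFullVanish (n+1) k βh α hres hzg y hy i hyi w
      have hvanY' : ∀ w, MvPolynomial.eval ((-1 : ℝ) • y) (A w) = 0 := by
        intro w
        rw [hAeval]
        exact auxFullVanish (n+1) k βh α hres hzg ((-1 : ℝ) • y) hy' i hyi' w
      set P : ℕ → ℝ :=
        fun e => MvPolynomial.eval y (MvPolynomial.homogeneousComponent e (A v)) with hP
      have hsumhomog : ∑ e ∈ Finset.range (s + 1),
          MvPolynomial.homogeneousComponent e (A v) = A v :=
        auxSumHomog (n+1) (s+1) (A v) (auxDegLT' (n+1) s (A v) (hAdeg v))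
      have H1 : ∑ e ∈ Finset.range (s + 1), P e = 0 := by
        rw [hP]
        rw [← map_sum (MvPolynomial.eval y) _ (Finset.range (s+1)), hsumhomog]
        exact hvanY v
      have H2 : ∑ e ∈ Finset.range (s + 1), (-1 : ℝ) ^ e * P e = 0 := by
        have h1 : ∀ e ∈ Finset.range (s + 1),
            MvPolynomial.eval ((-1 : ℝ) • y) (MvPolynomial.homogeneousComponent e (A v))
            = (-1 : ℝ) ^ e * P e := fun e _ =>
          auxHomogEvalSmul (MvPolynomial.homogeneousComponent_isHomogeneous e (A v)) _ y
        rw [← Finset.sum_congr rfl h1,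
          ← map_sum (MvPolynomial.eval ((-1 : ℝ) • y)) _ (Finset.range (s+1)), hsumhomog]
        exact hvanY' v
      set Se : ℝ := ∑ e ∈ (Finset.range (s+1)).filter (fun e => (s - e) % 2 = 0), P e with hSe
      set So : ℝ := ∑ e ∈ (Finset.range (s+1)).filter (fun e => ¬ ((s - e) % 2 = 0)), P e
        with hSo
      have hsplit1 : Se + So = 0 := by
        rw [hSe, hSo, Finset.sum_filter_add_sum_filter_not]
        exact H1
      have hsplit2 : (-1 : ℝ) ^ s * Se + (-1 : ℝ) ^ (s+1) * So = 0 := by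
        rw [← Finset.sum_filter_add_sum_filter_not (Finset.range (s+1))
          (fun e => (s - e) % 2 = 0) (fun e => (-1 : ℝ) ^ e * P e)] at H2
        rw [hSe, hSo, Finset.mul_sum, Finset.mul_sum, ← H2]
        congr 1
        · refine Finset.sum_congr rfl fun e he => ?_
          obtain ⟨her, hep⟩ := Finset.mem_filter.mp he
          have hes : e ≤ s := Nat.lt_succ_iff.mp (Finset.mem_range.mp her)
          have : e % 2 = s % 2 := by omega
          rw [auxNegOnePow e s this]
        · refine Finset.sum_congr rfl fun e he => ?_
          obtain ⟨her, hep⟩ := Finset.mem_filter.mp he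
          have hes : e ≤ s := Nat.lt_succ_iff.mp (Finset.mem_range.mp her)
          have : e % 2 = (s + 1) % 2 := by omega
          rw [auxNegOnePow e (s+1) this]
      have hSe0 : Se = 0 ∧ So = 0 := by
        rcases Nat.even_or_odd s with hpar | hpar
        · have h1 : (-1 : ℝ) ^ s = 1 := hpar.neg_one_pow
          have h2 : (-1 : ℝ) ^ (s + 1) = -1 := by
            rw [pow_succ, h1]
            ring
          rw [h1, h2] at hsplit2
          constructor <;> linarith
        · have h1 : (-1 : ℝ) ^ s = -1 := hpar.neg_one_pow
          have h2 : (-1 : ℝ) ^ (s + 1) = 1 := by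
            rw [pow_succ, h1]
            ring
          rw [h1, h2] at hsplit2
          constructor <;> linarith
      rw [hMain u v]
      have hterm : ∀ e ∈ Finset.range (s + 1),
          MvPolynomial.eval u (auxW (n+1) s e)
            * MvPolynomial.eval u (MvPolynomial.homogeneousComponent e (A v))
          = r ^ (2 * ((s - e) / 2) + e) * P e := by
        intro e _
        have h1 : MvPolynomial.eval u (MvPolynomial.homogeneousComponent e (A v))
            = r ^ e * P e := by
          rw [hu]
          exact auxHomogEvalSmul (MvPolynomial.homogeneousComponent_isHomogeneous e (A v)) r y
        have h2 : MvPolynomial.eval u (auxW (n+1) s e) = r ^ (2 * ((s - e) / 2)) := by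
          rw [auxWeval, ← hr2, ← pow_mul]
        rw [h1, h2, pow_add]
        ring
      rw [Finset.sum_congr rfl hterm]
      rw [← Finset.sum_filter_add_sum_filter_not (Finset.range (s+1))
        (fun e => (s - e) % 2 = 0) (fun e => r ^ (2 * ((s - e) / 2) + e) * P e)]
      have hA1 : ∀ e ∈ (Finset.range (s+1)).filter (fun e => (s - e) % 2 = 0),
          r ^ (2 * ((s - e) / 2) + e) * P e = r ^ s * P e := by
        intro e he
        obtain ⟨her, hep⟩ := Finset.mem_filter.mp he
        have hes : e ≤ s := Nat.lt_succ_iff.mp (Finset.mem_range.mp her)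
        have : 2 * ((s - e) / 2) + e = s := by omega
        rw [this]
      have hA2 : ∀ e ∈ (Finset.range (s+1)).filter (fun e => ¬ ((s - e) % 2 = 0)),
          r ^ (2 * ((s - e) / 2) + e) * P e = r ^ (s - 1) * P e := by
        intro e he
        obtain ⟨her, hep⟩ := Finset.mem_filter.mp he
        have hes : e ≤ s := Nat.lt_succ_iff.mp (Finset.mem_range.mp her)
        have : 2 * ((s - e) / 2) + e = s - 1 := by omega
        rw [this]
      rw [Finset.sum_congr rfl hA1, Finset.sum_congr rfl hA2,
        ← Finset.mul_sum, ← Finset.mul_sum, ← hSe, ← hSo, hSe0.1, hSe0.2]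
      ring
  · -- resSph (iU βext) = α
    rw [← hres]
    funext u
    show (iU βext u.1).compLinearMap _ = (iU βh u.1).compLinearMap _
    have htens : iU βext u.1 = iU βh u.1 := by
      apply AlternatingMap.ext
      intro v
      rw [hMain u.1 v]
      have hWone : ∀ e, MvPolynomial.eval u.1 (auxW (n+1) s e) = 1 := by
        intro e
        rw [auxWeval]
        have hmem : (∑ t, u.1 t ^ 2) = 1 := u.2
        rw [hmem, one_pow]
      have h1 : ∀ e ∈ Finset.range (s+1),
          MvPolynomial.eval u.1 (auxW (n+1) s e)
            * MvPolynomial.eval u.1 (MvPolynomial.homogeneousComponent e (A v))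
          = MvPolynomial.eval u.1 (MvPolynomial.homogeneousComponent e (A v)) := by
        intro e _
        rw [hWone, one_mul]
      rw [Finset.sum_congr rfl h1,
        ← map_sum (MvPolynomial.eval u.1) _ (Finset.range (s+1)),
        auxSumHomog (n+1) (s+1) (A v) (auxDegLT' (n+1) s (A v) (hAdeg v)),
        hAeval]
      rfl
    rw [htens]

end
end
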